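/- arXiv:1703.10386 — 4 statements merged into one kernel-verified Lean document; each statement's English description precedes it below -/
import Mathlib

section
/- Fix integers θ_i (i∈I). For φ ∈ Rep(Q,n) and i ∈ I define the n_i × n_i matrix μ_i(φ) = Σ_{α : h(α)=i} φ_α φ_α* − Σ_{α : t(α)=i} φ_α* φ_α + θ_i · Id, and let f : Rep(Q,n) → ℝ be f(φ) = Σ_{i∈I} ‖μ_i(φ)‖², the sum of squared Frobenius norms. Then f is smooth, and φ is a critical point of f (i.e. the Fréchet derivative of f at φ vanishes, viewing Rep(Q,n) as a real vector space) if and only if μ_{h(α)}(φ) · φ_α − φ_α · μ_{t(α)}(φ) = 0 for every arrow α ∈ A. -/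
open Matrix

/-! Setting: a finite quiver with vertex set `I`, arrow set `A`, head and tail maps
`hd tl : A → I`, a dimension vector `n : I → ℕ`, the representation space
`Rep = ⊕_α Hom(ℂ^{n (tl α)}, ℂ^{n (hd α)})`, and the group `G = ∏ᵢ GL(nᵢ, ℂ)` acting by
`(g·φ)_α = g_{hd α} φ_α g_{tl α}⁻¹`.  Fix integers `θ i` with `∑ θ i * n i = 0` and the
character `χ_θ(g) = ∏ᵢ det(gᵢ)^{-θ i}`. -/

/-- The representation space of the quiver. -/
abbrev QRep {I A : Type} (hd tl : A → I) (n : I → ℕ) : Type :=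
  ∀ α : A, Matrix (Fin (n (hd α))) (Fin (n (tl α))) ℂ

/-- The symmetry group `∏ᵢ GL(nᵢ, ℂ)`. -/
abbrev QGL (I : Type) (n : I → ℕ) : Type := ∀ i : I, GL (Fin (n i)) ℂ

/-- The action of `G` on the representation space. -/
noncomputable def qAct {I A : Type} (hd tl : A → I) (n : I → ℕ) (g : QGL I n) (φ : QRep hd tl n) :
    QRep hd tl n :=
  fun α => (g (hd α) : Matrix (Fin (n (hd α))) (Fin (n (hd α))) ℂ) * φ α *
    (((g (tl α))⁻¹ : GL (Fin (n (tl α))) ℂ) : Matrix (Fin (n (tl α))) (Fin (n (tl α))) ℂ)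

/-- The character `χ_θ(g) = ∏ᵢ det(gᵢ)^{-θ i}`. -/
noncomputable def qChi {I : Type} [Fintype I] (n : I → ℕ) (θ : I → ℤ) (g : QGL I n) : ℂ :=
  ∏ i : I, ((g i : Matrix (Fin (n i)) (Fin (n i)) ℂ).det) ^ (-θ i)

/-- `f` is a polynomial function on the representation space. -/
def qIsPolyFn {I A : Type} (hd tl : A → I) (n : I → ℕ) (f : QRep hd tl n → ℂ) : Prop :=
  ∃ p : MvPolynomial ((α : A) × (Fin (n (hd α)) × Fin (n (tl α)))) ℂ,
    ∀ φ : QRep hd tl n, f φ = MvPolynomial.eval (fun x => φ x.1 x.2.1 x.2.2) p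

/-- `f` is a semi-invariant of weight `m` for the character `χ_θ`. -/
def qSemiInvariant {I A : Type} [Fintype I] (hd tl : A → I) (n : I → ℕ) (θ : I → ℤ)
    (f : QRep hd tl n → ℂ) (m : ℕ) : Prop :=
  qIsPolyFn hd tl n f ∧
    ∀ (g : QGL I n) (φ : QRep hd tl n), f (qAct hd tl n g φ) = (qChi n θ g) ^ m * f φ

/-- `φ` is `χ_θ`-semistable: some semi-invariant of weight `m ≥ 1` does not vanish at `φ`. -/
def qSemistable {I A : Type} [Fintype I] (hd tl : A → I) (n : I → ℕ) (θ : I → ℤ)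
    (φ : QRep hd tl n) : Prop :=
  ∃ (f : QRep hd tl n → ℂ) (m : ℕ), 1 ≤ m ∧ qSemiInvariant hd tl n θ f m ∧ f φ ≠ 0

/-- The `G`-orbit of `φ`. -/
def qOrbit {I A : Type} (hd tl : A → I) (n : I → ℕ) (φ : QRep hd tl n) : Set (QRep hd tl n) :=
  Set.range fun g : QGL I n => qAct hd tl n g φ

/-- `φ` is `χ_θ`-stable: it is semistable, its orbit is closed in the semistable locus, and
its stabilizer equals the kernel `Δ` of the action of `G` on the representation space. -/
def qStable {I A : Type} [Fintype I] [Fintype A] (hd tl : A → I) (n : I → ℕ) (θ : I → ℤ)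
    (φ : QRep hd tl n) : Prop :=
  qSemistable hd tl n θ φ ∧
    (closure (qOrbit hd tl n φ) ∩ {ψ : QRep hd tl n | qSemistable hd tl n θ ψ}
      ⊆ qOrbit hd tl n φ) ∧
    ∀ g : QGL I n, qAct hd tl n g φ = φ ↔ ∀ ψ : QRep hd tl n, qAct hd tl n g ψ = ψ

/-- `W` is a subrepresentation of `φ`. -/
def qIsSubrep {I A : Type} (hd tl : A → I) (n : I → ℕ) (φ : QRep hd tl n)
    (W : ∀ i : I, Submodule ℂ (Fin (n i) → ℂ)) : Prop :=
  ∀ α : A, ∀ v ∈ W (tl α), (φ α).mulVec v ∈ W (hd α)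

/-- `θ(W) = ∑ᵢ θᵢ · dim Wᵢ`. -/
noncomputable def qThetaVal {I : Type} [Fintype I] (n : I → ℕ) (θ : I → ℤ)
    (W : ∀ i : I, Submodule ℂ (Fin (n i) → ℂ)) : ℤ :=
  ∑ i : I, θ i * (Module.finrank ℂ (W i) : ℤ)


/-- Transport of a square matrix along an equality of sizes. -/
def castSq {a b : ℕ} (e : a = b) (M : Matrix (Fin a) (Fin a) ℂ) : Matrix (Fin b) (Fin b) ℂ :=
  M.submatrix (Fin.cast e.symm) (Fin.cast e.symm)

/-- The shifted moment map
`μᵢ(φ) = ∑_{hd α = i} φ_α φ_α* − ∑_{tl α = i} φ_α* φ_α + θᵢ · Id`. -/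
noncomputable def qMu {I A : Type} [Fintype A] [DecidableEq I] (hd tl : A → I) (n : I → ℕ)
    (θ : I → ℤ) (φ : QRep hd tl n) (i : I) : Matrix (Fin (n i)) (Fin (n i)) ℂ :=
  (∑ α : {α : A // hd α = i}, castSq (congrArg n α.2) (φ α.1 * (φ α.1)ᴴ)) -
    (∑ α : {α : A // tl α = i}, castSq (congrArg n α.2) ((φ α.1)ᴴ * φ α.1)) +
    (θ i : ℂ) • (1 : Matrix (Fin (n i)) (Fin (n i)) ℂ)

/-- The square of the moment map: `f(φ) = ∑ᵢ ‖μᵢ(φ)‖²` (squared Frobenius norms,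
`‖M‖² = tr(M M*)`). -/
noncomputable def qMorseFn {I A : Type} [Fintype I] [Fintype A] [DecidableEq I]
    (hd tl : A → I) (n : I → ℕ) (θ : I → ℤ) (φ : QRep hd tl n) : ℝ :=
  ∑ i : I, ((qMu hd tl n θ φ i) * (qMu hd tl n θ φ i)ᴴ).trace.re

attribute [local instance] Matrix.normedAddCommGroup Matrix.normedSpace

section Aux

/-! ### Continuous linear map building blocks -/

noncomputable def ctCLM (a b : ℕ) : Matrix (Fin a) (Fin b) ℂ →L[ℝ] Matrix (Fin b) (Fin a) ℂ :=
  LinearMap.toContinuousLinearMap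
    { toFun := fun M => Mᴴ
      map_add' := fun M N => conjTranspose_add M N
      map_smul' := fun r M => by ext i j; simp [conjTranspose_apply, star_smul] }

@[simp] lemma ctCLM_apply {a b : ℕ} (M : Matrix (Fin a) (Fin b) ℂ) : ctCLM a b M = Mᴴ := rfl

noncomputable def traceReCLM (a : ℕ) : Matrix (Fin a) (Fin a) ℂ →L[ℝ] ℝ :=
  LinearMap.toContinuousLinearMap
    { toFun := fun M => (M.trace).re
      map_add' := fun M N => by simp [trace_add]
      map_smul' := fun r M => by simp [trace_smul, Complex.real_smul] }

@[simp] lemma traceReCLM_apply {a : ℕ} (M : Matrix (Fin a) (Fin a) ℂ) :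
    traceReCLM a M = (M.trace).re := rfl

noncomputable def mulCLM (a b c : ℕ) : Matrix (Fin a) (Fin b) ℂ →L[ℝ]
    (Matrix (Fin b) (Fin c) ℂ →L[ℝ] Matrix (Fin a) (Fin c) ℂ) :=
  LinearMap.toContinuousLinearMap
    { toFun := fun M => LinearMap.toContinuousLinearMap
        { toFun := fun N => M * N
          map_add' := fun N N' => by simp [Matrix.mul_add]
          map_smul' := fun r N => by simp [Matrix.mul_smul] }
      map_add' := fun M M' => by ext N i j; simp [Matrix.add_mul]
      map_smul' := fun r M => by ext N i j; simp [Matrix.smul_mul] }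

@[simp] lemma mulCLM_apply {a b c : ℕ} (M : Matrix (Fin a) (Fin b) ℂ)
    (N : Matrix (Fin b) (Fin c) ℂ) : mulCLM a b c M N = M * N := rfl

noncomputable def castSqCLM {a b : ℕ} (e : a = b) :
    Matrix (Fin a) (Fin a) ℂ →L[ℝ] Matrix (Fin b) (Fin b) ℂ :=
  LinearMap.toContinuousLinearMap
    { toFun := castSq e
      map_add' := fun M N => by ext i j; simp [castSq]
      map_smul' := fun r M => by ext i j; simp [castSq] }

@[simp] lemma castSqCLM_apply {a b : ℕ} (e : a = b) (M : Matrix (Fin a) (Fin a) ℂ) :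
    castSqCLM e M = castSq e M := rfl

@[simp] lemma castSq_rfl {a : ℕ} (M : Matrix (Fin a) (Fin a) ℂ) : castSq rfl M = M := rfl

lemma castSq_conjTranspose {a b : ℕ} (e : a = b) (M : Matrix (Fin a) (Fin a) ℂ) :
    (castSq e M)ᴴ = castSq e Mᴴ := by
  subst e; rfl

/-! ### Small matrix facts -/

lemma re_trace_conjTranspose {a : ℕ} (M : Matrix (Fin a) (Fin a) ℂ) :
    (Mᴴ.trace).re = (M.trace).re := by
  rw [trace_conjTranspose]; simp

lemma re_trace_mul_conjTranspose_nonneg {a b : ℕ} (M : Matrix (Fin a) (Fin b) ℂ) :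
    ((M * Mᴴ).trace).re = ∑ i, ∑ j, Complex.normSq (M i j) := by
  rw [Matrix.trace]
  simp only [diag_apply, Matrix.mul_apply, conjTranspose_apply]
  rw [Complex.re_sum]
  refine Finset.sum_congr rfl fun i _ => ?_
  rw [Complex.re_sum]
  refine Finset.sum_congr rfl fun j _ => ?_
  rw [Complex.star_def, Complex.mul_conj]
  simp

lemma eq_zero_of_re_trace_mul_conjTranspose {a b : ℕ} (M : Matrix (Fin a) (Fin b) ℂ)
    (h : ((M * Mᴴ).trace).re = 0) : M = 0 := by
  rw [re_trace_mul_conjTranspose_nonneg] at h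
  ext i j
  have h1 : ∀ i ∈ (Finset.univ : Finset (Fin a)),
      0 ≤ ∑ j, Complex.normSq (M i j) :=
    fun i _ => Finset.sum_nonneg fun j _ => Complex.normSq_nonneg _
  have h2 := (Finset.sum_eq_zero_iff_of_nonneg h1).mp h i (Finset.mem_univ i)
  have h3 := (Finset.sum_eq_zero_iff_of_nonneg
    (fun j _ => Complex.normSq_nonneg (M i j))).mp h2 j (Finset.mem_univ j)
  simpa using Complex.normSq_eq_zero.mp h3

/-! ### Collapsing fiberwise sums -/

lemma sum_fiber_eq {I A M : Type} [Fintype I] [Fintype A] [DecidableEq I] [AddCommMonoid M]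
    (f : A → I) (g : A → M) :
    (∑ i : I, ∑ α : {α : A // f α = i}, g α.1) = ∑ α : A, g α := by
  have h1 : ∑ x : Σ i : I, {α : A // f α = i}, g x.2.1 = ∑ α : A, g α :=
    Fintype.sum_equiv (Equiv.sigmaFiberEquiv f) _ _ (fun x => rfl)
  rw [← h1, ← Finset.univ_sigma_univ, Finset.sum_sigma]

section Quiver

variable {I A : Type} [Fintype I] [Fintype A] [DecidableEq I]
  (hd tl : A → I) (n : I → ℕ) (θ : I → ℤ)

lemma qMu_conjTranspose (φ : QRep hd tl n) (i : I) :
    (qMu hd tl n θ φ i)ᴴ = qMu hd tl n θ φ i := by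
  unfold qMu
  rw [conjTranspose_add, conjTranspose_sub, conjTranspose_sum, conjTranspose_sum]
  congr 1
  · congr 1 <;> refine Finset.sum_congr rfl fun α _ => ?_ <;>
      rw [castSq_conjTranspose, conjTranspose_mul, conjTranspose_conjTranspose]
  · rw [conjTranspose_smul, conjTranspose_one]
    congr 1
    simp

/-- The derivative of `φ ↦ qMu φ i` at `φ`. -/
noncomputable def muDeriv (φ : QRep hd tl n) (i : I) :
    QRep hd tl n →L[ℝ] Matrix (Fin (n i)) (Fin (n i)) ℂ :=
  (∑ α : {α : A // hd α = i}, (castSqCLM (congrArg n α.2)).comp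
      (((mulCLM _ _ _).isBoundedBilinearMap.deriv (φ α.1, (φ α.1)ᴴ)).comp
        ((ContinuousLinearMap.proj α.1).prod
          ((ctCLM _ _).comp (ContinuousLinearMap.proj α.1)))))
  - (∑ α : {α : A // tl α = i}, (castSqCLM (congrArg n α.2)).comp
      (((mulCLM _ _ _).isBoundedBilinearMap.deriv ((φ α.1)ᴴ, φ α.1)).comp
        (((ctCLM _ _).comp (ContinuousLinearMap.proj α.1)).prod
          (ContinuousLinearMap.proj α.1))))

lemma muDeriv_apply (φ ψ : QRep hd tl n) (i : I) :
    muDeriv hd tl n φ i ψ =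
      (∑ α : {α : A // hd α = i},
        castSq (congrArg n α.2) (φ α.1 * (ψ α.1)ᴴ + ψ α.1 * (φ α.1)ᴴ)) -
      (∑ α : {α : A // tl α = i},
        castSq (congrArg n α.2) ((φ α.1)ᴴ * ψ α.1 + (ψ α.1)ᴴ * φ α.1)) := by
  unfold muDeriv
  simp only [ContinuousLinearMap.sub_apply, ContinuousLinearMap.sum_apply,
    ContinuousLinearMap.comp_apply, ContinuousLinearMap.prod_apply,
    ContinuousLinearMap.proj_apply, IsBoundedBilinearMap.deriv_apply,
    mulCLM_apply, ctCLM_apply, castSqCLM_apply]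
  congr 1 <;> exact Finset.sum_congr rfl fun α _ => rfl

lemma muDeriv_hasFDerivAt (φ : QRep hd tl n) (i : I) :
    HasFDerivAt (fun ψ => qMu hd tl n θ ψ i) (muDeriv hd tl n φ i) φ := by
  unfold qMu muDeriv
  apply HasFDerivAt.add_const
  refine HasFDerivAt.sub (HasFDerivAt.fun_sum fun α _ => ?_) (HasFDerivAt.fun_sum fun α _ => ?_)
  · exact (castSqCLM (congrArg n α.2)).hasFDerivAt.comp φ
      (((mulCLM _ _ _).isBoundedBilinearMap.hasFDerivAt (φ α.1, (φ α.1)ᴴ)).comp φ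
        (HasFDerivAt.prodMk ((ContinuousLinearMap.proj α.1).hasFDerivAt)
          (((ctCLM _ _).hasFDerivAt.comp φ (ContinuousLinearMap.proj α.1).hasFDerivAt))))
  · exact (castSqCLM (congrArg n α.2)).hasFDerivAt.comp φ
      (((mulCLM _ _ _).isBoundedBilinearMap.hasFDerivAt ((φ α.1)ᴴ, φ α.1)).comp φ
        (HasFDerivAt.prodMk (((ctCLM _ _).hasFDerivAt.comp φ (ContinuousLinearMap.proj α.1).hasFDerivAt))
          ((ContinuousLinearMap.proj α.1).hasFDerivAt)))

/-- The derivative of the Morse function at `φ`. -/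
noncomputable def morseDeriv (φ : QRep hd tl n) : QRep hd tl n →L[ℝ] ℝ :=
  ∑ i : I, (traceReCLM (n i)).comp
    (((mulCLM _ _ _).isBoundedBilinearMap.deriv
        (qMu hd tl n θ φ i, (qMu hd tl n θ φ i)ᴴ)).comp
      ((muDeriv hd tl n φ i).prod ((ctCLM _ _).comp (muDeriv hd tl n φ i))))

lemma morseDeriv_hasFDerivAt (φ : QRep hd tl n) :
    HasFDerivAt (qMorseFn hd tl n θ) (morseDeriv hd tl n θ φ) φ := by
  unfold qMorseFn morseDeriv
  refine HasFDerivAt.fun_sum fun i _ => ?_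
  have h := (traceReCLM (n i)).hasFDerivAt.comp φ
    (((mulCLM _ _ _).isBoundedBilinearMap.hasFDerivAt
        (qMu hd tl n θ φ i, (qMu hd tl n θ φ i)ᴴ)).comp φ
      (HasFDerivAt.prodMk (muDeriv_hasFDerivAt hd tl n θ φ i)
        ((ctCLM _ _).hasFDerivAt.comp φ (muDeriv_hasFDerivAt hd tl n θ φ i))))
  exact h

lemma morseDeriv_apply (φ ψ : QRep hd tl n) :
    morseDeriv hd tl n θ φ ψ = ∑ i : I,
      (((qMu hd tl n θ φ i * (muDeriv hd tl n φ i ψ)ᴴ).trace).re +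
       ((muDeriv hd tl n φ i ψ * (qMu hd tl n θ φ i)ᴴ).trace).re) := by
  unfold morseDeriv
  rw [ContinuousLinearMap.sum_apply]
  apply Finset.sum_congr rfl
  intro i _
  exact (congrArg Complex.re (trace_add _ _)).trans (Complex.add_re _ _)


lemma trace_castSq_mul {i j : I} (h : j = i) (M : Matrix (Fin (n j)) (Fin (n j)) ℂ)
    (N : ∀ k : I, Matrix (Fin (n k)) (Fin (n k)) ℂ) :
    (castSq (congrArg n h) M * N i).trace = (M * N j).trace := by
  subst h; rfl

lemma bracket_eq {a b : ℕ} (ψM φM : Matrix (Fin a) (Fin b) ℂ)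
    (μh : Matrix (Fin a) (Fin a) ℂ) (μt : Matrix (Fin b) (Fin b) ℂ)
    (hh : μhᴴ = μh) (ht : μtᴴ = μt) :
    ((((φM * ψMᴴ + ψM * φMᴴ) * μh).trace).re) -
      ((((φMᴴ * ψM + ψMᴴ * φM) * μt).trace).re) =
      2 * ((ψM * (μh * φM - φM * μt)ᴴ).trace).re := by
  have e1 : (((φM * ψMᴴ) * μh).trace).re = ((ψM * (φMᴴ * μh)).trace).re := by
    rw [← re_trace_conjTranspose ((φM * ψMᴴ) * μh), conjTranspose_mul, conjTranspose_mul,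
      conjTranspose_conjTranspose, hh, trace_mul_comm, Matrix.mul_assoc]
  have e2 : (((ψM * φMᴴ) * μh).trace).re = ((ψM * (φMᴴ * μh)).trace).re := by
    rw [Matrix.mul_assoc]
  have e3 : (((φMᴴ * ψM) * μt).trace).re = ((ψM * (μt * φMᴴ)).trace).re := by
    rw [Matrix.mul_assoc, trace_mul_comm, Matrix.mul_assoc]
  have e4 : (((ψMᴴ * φM) * μt).trace).re = ((ψM * (μt * φMᴴ)).trace).re := by
    rw [← re_trace_conjTranspose ((ψMᴴ * φM) * μt), conjTranspose_mul, conjTranspose_mul,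
      conjTranspose_conjTranspose, ht, trace_mul_comm, Matrix.mul_assoc, trace_mul_comm, Matrix.mul_assoc]
  have hConj : (μh * φM - φM * μt)ᴴ = φMᴴ * μh - μt * φMᴴ := by
    rw [conjTranspose_sub, conjTranspose_mul, conjTranspose_mul, hh, ht]
  rw [Matrix.add_mul, Matrix.add_mul, trace_add, trace_add, Complex.add_re, Complex.add_re,
    hConj, Matrix.mul_sub, trace_sub, Complex.sub_re, e1, e2, e3, e4]
  ring

lemma morseDeriv_apply_eq (φ ψ : QRep hd tl n) :
    morseDeriv hd tl n θ φ ψ = ∑ α : A,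
      (4 * ((ψ α * (qMu hd tl n θ φ (hd α) * φ α - φ α * qMu hd tl n θ φ (tl α))ᴴ).trace).re) := by
  rw [morseDeriv_apply]
  trans ∑ i : I, 2 * ((muDeriv hd tl n φ i ψ * qMu hd tl n θ φ i).trace).re
  · refine Finset.sum_congr rfl fun i _ => ?_
    have e1 : qMu hd tl n θ φ i * (muDeriv hd tl n φ i ψ)ᴴ
        = (muDeriv hd tl n φ i ψ * (qMu hd tl n θ φ i)ᴴ)ᴴ := by
      rw [conjTranspose_mul, conjTranspose_conjTranspose]
    rw [e1, re_trace_conjTranspose, qMu_conjTranspose]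
    ring
  trans ∑ i : I, 2 *
      ((∑ α : {α : A // hd α = i},
          (((φ α.1 * (ψ α.1)ᴴ + ψ α.1 * (φ α.1)ᴴ) * qMu hd tl n θ φ (hd α.1)).trace).re)
        - ∑ α : {α : A // tl α = i},
          ((((φ α.1)ᴴ * ψ α.1 + (ψ α.1)ᴴ * φ α.1) * qMu hd tl n θ φ (tl α.1)).trace).re)
  · refine Finset.sum_congr rfl fun i _ => ?_
    congr 1
    rw [muDeriv_apply, Matrix.sub_mul, trace_sub, Complex.sub_re]
    congr 1
    · rw [Finset.sum_mul, trace_sum, Complex.re_sum]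
      exact Finset.sum_congr rfl fun α _ => by rw [trace_castSq_mul n α.2]
    · rw [Finset.sum_mul, trace_sum, Complex.re_sum]
      exact Finset.sum_congr rfl fun α _ => by rw [trace_castSq_mul n α.2]
  trans 2 * ((∑ α : A,
        (((φ α * (ψ α)ᴴ + ψ α * (φ α)ᴴ) * qMu hd tl n θ φ (hd α)).trace).re)
      - ∑ α : A, ((((φ α)ᴴ * ψ α + (ψ α)ᴴ * φ α) * qMu hd tl n θ φ (tl α)).trace).re)
  · rw [← Finset.mul_sum]
    congr 1
    rw [Finset.sum_sub_distrib]
    congr 1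
    · exact sum_fiber_eq hd
        (fun α => (((φ α * (ψ α)ᴴ + ψ α * (φ α)ᴴ) * qMu hd tl n θ φ (hd α)).trace).re)
    · exact sum_fiber_eq tl
        (fun α => ((((φ α)ᴴ * ψ α + (ψ α)ᴴ * φ α) * qMu hd tl n θ φ (tl α)).trace).re)
  rw [← Finset.sum_sub_distrib, Finset.mul_sum]
  refine Finset.sum_congr rfl fun α _ => ?_
  rw [bracket_eq (ψ α) (φ α) _ _ (qMu_conjTranspose hd tl n θ φ (hd α))
    (qMu_conjTranspose hd tl n θ φ (tl α))]
  ring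

end Quiver

end Aux

/-- The square of the moment map is smooth, and `φ` is a critical point of it (the real
Fréchet derivative vanishes) iff `μ_{hd α}(φ) φ_α − φ_α μ_{tl α}(φ) = 0` for every arrow. -/
theorem statement7 {I A : Type} [Fintype I] [Fintype A] [DecidableEq I]
    (hd tl : A → I) (n : I → ℕ) (θ : I → ℤ) (φ : QRep hd tl n) :
    ContDiff ℝ (⊤ : ℕ∞) (qMorseFn hd tl n θ) ∧
      (fderiv ℝ (qMorseFn hd tl n θ) φ = 0 ↔
        ∀ α : A, qMu hd tl n θ φ (hd α) * φ α - φ α * qMu hd tl n θ φ (tl α) = 0) := by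
  classical
  have hasD := morseDeriv_hasFDerivAt hd tl n θ φ
  constructor
  · -- Smoothness
    have hmu : ∀ i : I, ContDiff ℝ (⊤ : ℕ∞) (fun ψ : QRep hd tl n => qMu hd tl n θ ψ i) := by
      intro i
      unfold qMu
      refine ContDiff.add (ContDiff.sub (ContDiff.sum fun α _ => ?_)
        (ContDiff.sum fun α _ => ?_)) contDiff_const
      · exact (castSqCLM (congrArg n α.2)).contDiff.comp
          (((mulCLM _ _ _).isBoundedBilinearMap.contDiff).comp
            (ContDiff.prodMk ((ContinuousLinearMap.proj α.1 :
                QRep hd tl n →L[ℝ] Matrix _ _ ℂ).contDiff)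
              ((ctCLM _ _).contDiff.comp (ContinuousLinearMap.proj α.1 :
                QRep hd tl n →L[ℝ] Matrix _ _ ℂ).contDiff)))
      · exact (castSqCLM (congrArg n α.2)).contDiff.comp
          (((mulCLM _ _ _).isBoundedBilinearMap.contDiff).comp
            (ContDiff.prodMk (((ctCLM _ _).contDiff.comp (ContinuousLinearMap.proj α.1 :
                QRep hd tl n →L[ℝ] Matrix _ _ ℂ).contDiff))
              ((ContinuousLinearMap.proj α.1 :
                QRep hd tl n →L[ℝ] Matrix _ _ ℂ).contDiff)))
    unfold qMorseFn
    refine ContDiff.sum fun i _ => ?_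
    exact (traceReCLM (n i)).contDiff.comp
      (((mulCLM _ _ _).isBoundedBilinearMap.contDiff).comp
        (ContDiff.prodMk (hmu i) ((ctCLM _ _).contDiff.comp (hmu i))))
  · rw [hasD.fderiv]
    constructor
    · intro h α
      set Cα := qMu hd tl n θ φ (hd α) * φ α - φ α * qMu hd tl n θ φ (tl α) with hCα
      have h0 : morseDeriv hd tl n θ φ
          (Pi.single (M := fun β : A => Matrix (Fin (n (hd β))) (Fin (n (tl β))) ℂ) α Cα) = 0 := by
        rw [h]; rfl
      rw [morseDeriv_apply_eq] at h0
      have h1 : ∑ β : A, (4 * (((Pi.single (M := fun β : A =>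
            Matrix (Fin (n (hd β))) (Fin (n (tl β))) ℂ) α Cα) β *
            (qMu hd tl n θ φ (hd β) * φ β - φ β * qMu hd tl n θ φ (tl β))ᴴ).trace).re)
          = 4 * ((Cα * Cαᴴ).trace).re := by
        rw [Finset.sum_eq_single_of_mem α (Finset.mem_univ α)]
        · rw [Pi.single_eq_same, ← hCα]
        · intro β _ hβ
          rw [Pi.single_eq_of_ne hβ]
          simp
      rw [h1] at h0
      have h2 : ((Cα * Cαᴴ).trace).re = 0 := by linarith
      exact eq_zero_of_re_trace_mul_conjTranspose Cα h2
    · intro h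
      refine ContinuousLinearMap.ext fun ψ => ?_
      rw [morseDeriv_apply_eq]
      simp only [ContinuousLinearMap.zero_apply]
      refine Finset.sum_eq_zero fun α _ => ?_
      rw [h α]
      simp
end

section
/- Let V be a finite-dimensional complex inner product space and β : V → V a self-adjoint endomorphism with distinct eigenvalues λ_1 < λ_2 < ... < λ_r. For 1 ≤ k ≤ r set V^k = ⊕_{j≤k} ker(β − λ_j·Id), giving a full flag 0 ≠ V^1 ⊊ ... ⊊ V^r = V. Then for g ∈ GL(V), the family of endomorphisms {exp(tβ) ∘ g ∘ exp(−tβ) : t ∈ [0,∞)} is bounded in End(V) if and only if g(V^k) ⊆ V^k for every k = 1, ..., r. (Thus the parabolic subgroup P(β) of GL(V) is exactly the stabilizer of the flag induced by β.) -/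
/-- The eigenspace of an endomorphism `β` for the eigenvalue `c`. -/
noncomputable def eigSp {V : Type*} [AddCommGroup V] [Module ℂ V]
    (β : V →ₗ[ℂ] V) (c : ℂ) : Submodule ℂ V :=
  LinearMap.ker (β - c • LinearMap.id)

set_option maxHeartbeats 1000000 in
lemma eig_exp {V : Type*} [NormedAddCommGroup V] [InnerProductSpace ℂ V]
    [FiniteDimensional ℂ V] (A : V →L[ℂ] V) (c : ℂ) (v : V) (h : A v = c • v) :
    NormedSpace.exp A v = Complex.exp c • v := by
  have hn : ∀ n : ℕ, (A ^ n) v = c ^ n • v := by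
    intro n
    induction n with
    | zero => simp
    | succ n ih =>
      have hs : (A ^ (n + 1)) v = A ((A ^ n) v) := by
        rw [pow_succ', ContinuousLinearMap.mul_apply]
      rw [hs, ih, map_smul, h, smul_smul, ← pow_succ]
  have h1 : HasSum (fun n : ℕ => (((Nat.factorial n : ℂ))⁻¹ • A ^ n) v) (NormedSpace.exp A v) :=
    (NormedSpace.exp_series_hasSum_exp' (𝕂 := ℂ) A).mapL (ContinuousLinearMap.apply ℂ V v)
  have h2 : HasSum (fun n : ℕ => (((Nat.factorial n : ℂ))⁻¹ • A ^ n) v) (Complex.exp c • v) := by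
    rw [Complex.exp_eq_exp_ℂ]
    have h3 := (NormedSpace.exp_series_hasSum_exp' (𝕂 := ℂ) c).smul_const (R := ℂ) v
    convert h3 using 2 with n
    rw [ContinuousLinearMap.smul_apply, hn, smul_smul, smul_eq_mul]
  exact h1.unique h2

/-- Let `V` be a finite-dimensional complex inner product space, `β` a self-adjoint
endomorphism with distinct eigenvalues `μ 0 < μ 1 < ... < μ (r-1)` and associated flag
`V^k = ⊕_{j ≤ k} ker(β − μ j)`.  For `g ∈ GL(V)`, the family
`{exp(tβ) ∘ g ∘ exp(−tβ) : t ∈ [0,∞)}` is bounded in `End(V)` iff `g` stabilizes the flag,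
i.e. `g(V^k) ⊆ V^k` for every `k`.  (Thus `P(β)` is the stabilizer of the flag of `β`.) -/
theorem statement10 {V : Type*} [NormedAddCommGroup V] [InnerProductSpace ℂ V]
    [FiniteDimensional ℂ V]
    (β : V →L[ℂ] V)
    (hsa : ∀ v w : V, (inner ℂ (β v) w : ℂ) = inner ℂ v (β w))
    {r : ℕ} (μ : Fin r → ℝ) (hmono : StrictMono μ)
    (hne : ∀ j : Fin r, eigSp (β : V →ₗ[ℂ] V) (μ j : ℂ) ≠ ⊥)
    (hsup : (⨆ j : Fin r, eigSp (β : V →ₗ[ℂ] V) (μ j : ℂ)) = ⊤)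
    (g : V ≃L[ℂ] V) :
    Bornology.IsBounded
        {M : V →L[ℂ] V | ∃ t : ℝ, 0 ≤ t ∧
          M = NormedSpace.exp (t • β) * (g : V →L[ℂ] V) * NormedSpace.exp (-(t • β))} ↔
      ∀ k : Fin r, ∀ v ∈ (⨆ j : Fin r, ⨆ _ : j ≤ k, eigSp (β : V →ₗ[ℂ] V) (μ j : ℂ)),
        g v ∈ (⨆ j : Fin r, ⨆ _ : j ≤ k, eigSp (β : V →ₗ[ℂ] V) (μ j : ℂ)) := by
  classical
  set E : Fin r → Submodule ℂ V := fun j => eigSp (β : V →ₗ[ℂ] V) (μ j : ℂ) with hE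
  have hmemE : ∀ (j : Fin r) (v : V), v ∈ E j ↔ β v = (μ j : ℂ) • v := by
    intro j v
    simp [hE, eigSp, LinearMap.mem_ker, sub_eq_zero]
  -- orthogonality of distinct eigenspaces
  have horth : ∀ i j : Fin r, i ≠ j → ∀ v ∈ E i, v ∈ (E j)ᗮ := by
    intro i j hij v hv
    rw [Submodule.mem_orthogonal]
    intro u hu
    have h1 : (inner ℂ (β u) v : ℂ) = (μ j : ℂ) * inner ℂ u v := by
      rw [(hmemE j u).1 hu, inner_smul_left]
      simp [Complex.conj_ofReal]
    have h2 : (inner ℂ u (β v) : ℂ) = (μ i : ℂ) * inner ℂ u v := by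
      rw [(hmemE i v).1 hv, inner_smul_right]
    have h3 := hsa u v
    rw [h1, h2] at h3
    have h4 : ((μ j : ℂ) - (μ i : ℂ)) * inner ℂ u v = 0 := by
      rw [sub_mul, h3, sub_self]
    have hμ : (μ j : ℂ) ≠ (μ i : ℂ) := by
      exact_mod_cast (hmono.injective.ne hij.symm)
    rcases mul_eq_zero.1 h4 with h | h
    · exact absurd (sub_eq_zero.1 h) hμ
    · exact h
  -- projections
  let P : Fin r → (V →L[ℂ] V) := fun j => (E j).subtypeL ∘L (E j).orthogonalProjectionOnto
  have hPmem : ∀ (j : Fin r) (v : V), P j v ∈ E j := by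
    intro j v
    exact Submodule.coe_mem _
  have hPeq : ∀ (j : Fin r) (v : V), v ∈ E j → P j v = v := by
    intro j v hv
    exact Submodule.starProjection_eq_self_iff.2 hv
  have hPzero : ∀ i j : Fin r, i ≠ j → ∀ v ∈ E i, P j v = 0 := by
    intro i j hij v hv
    have := Submodule.orthogonalProjectionOnto_apply_of_mem_orthogonal (horth i j hij v hv)
    simp only [P, ContinuousLinearMap.comp_apply, this, Submodule.subtypeL_apply,
      ZeroMemClass.coe_zero]
  -- decomposition of the identity
  have hsum : ∀ v : V, ∑ j : Fin r, P j v = v := by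
    intro v
    have hv : v ∈ (⨆ j : Fin r, E j) := by rw [hE, hsup]; trivial
    refine Submodule.iSup_induction (motive := fun w => ∑ j : Fin r, P j w = w) E hv ?_ ?_ ?_
    · intro i x hx
      rw [Finset.sum_eq_single i]
      · exact hPeq i x hx
      · intro j _ hj
        exact hPzero i j (Ne.symm hj) x hx
      · intro h
        exact absurd (Finset.mem_univ i) h
    · simp
    · intro x y hx hy
      simp only [map_add, Finset.sum_add_distrib, hx, hy]
  -- eigenvalue equation for t • β
  have heig : ∀ (t : ℝ) (i : Fin r) (v : V), v ∈ E i →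
      (t • β) v = ((t * μ i : ℝ) : ℂ) • v := by
    intro t i v hv
    have h1 : (t • β) v = t • ((μ i : ℂ) • v) := by
      rw [ContinuousLinearMap.smul_apply, (hmemE i v).1 hv]
    rw [h1, ← smul_assoc]
    congr 1
    rw [Complex.real_smul]
    push_cast
    ring
  have hexp : ∀ (t : ℝ) (i : Fin r) (v : V), v ∈ E i →
      NormedSpace.exp (t • β) v = Complex.exp ((t * μ i : ℝ) : ℂ) • v := by
    intro t i v hv
    exact eig_exp _ _ _ (heig t i v hv)
  -- the main formula
  have hM : ∀ (t : ℝ) (i : Fin r) (v : V), v ∈ E i →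
      (NormedSpace.exp (t • β) * (g : V →L[ℂ] V) * NormedSpace.exp (-(t • β))) v =
        ∑ j : Fin r, Complex.exp ((t * (μ j - μ i) : ℝ) : ℂ) • P j ((g : V →L[ℂ] V) v) := by
    intro t i v hv
    have hneg : -(t • β) = (-t) • β := by rw [neg_smul]
    have hdecomp : NormedSpace.exp (t • β) ((g : V →L[ℂ] V) v) =
        ∑ j : Fin r, Complex.exp ((t * μ j : ℝ) : ℂ) • P j ((g : V →L[ℂ] V) v) := by
      conv_lhs => rw [← hsum ((g : V →L[ℂ] V) v)]
      rw [map_sum]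
      exact Finset.sum_congr rfl fun j _ => hexp t j _ (hPmem j _)
    rw [ContinuousLinearMap.mul_apply, ContinuousLinearMap.mul_apply, hneg,
      hexp (-t) i v hv, map_smul, map_smul, hdecomp, Finset.smul_sum]
    refine Finset.sum_congr rfl fun j _ => ?_
    rw [smul_smul, ← Complex.exp_add]
    congr 1
    push_cast
    ring
  have hMP : ∀ (t : ℝ) (i : Fin r) (v : V), v ∈ E i → ∀ j : Fin r,
      P j ((NormedSpace.exp (t • β) * (g : V →L[ℂ] V) * NormedSpace.exp (-(t • β))) v) =
        Complex.exp ((t * (μ j - μ i) : ℝ) : ℂ) • P j ((g : V →L[ℂ] V) v) := by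
    intro t i v hv j
    rw [hM t i v hv, map_sum]
    rw [Finset.sum_eq_single j]
    · rw [map_smul, hPeq j _ (hPmem j _)]
    · intro l _ hl
      rw [map_smul, hPzero l j hl _ (hPmem l _), smul_zero]
    · intro h
      exact absurd (Finset.mem_univ j) h
  have hnorm : ∀ (x : ℝ) (w : V), ‖Complex.exp ((x : ℝ) : ℂ) • w‖ = Real.exp x * ‖w‖ := by
    intro x w
    rw [norm_smul]
    simp [Complex.norm_exp]
  -- flag facts
  have hVk : ∀ (k j : Fin r), j ≤ k → E j ≤ ⨆ j : Fin r, ⨆ _ : j ≤ k, E j := by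
    intro k j hjk
    exact le_trans (le_iSup (fun _ : j ≤ k => E j) hjk)
      (le_iSup (fun j : Fin r => ⨆ _ : j ≤ k, E j) j)
  have hflag : ∀ (k j : Fin r), k < j → ∀ w ∈ (⨆ j : Fin r, ⨆ _ : j ≤ k, E j), P j w = 0 := by
    intro k j hkj w hw
    refine Submodule.iSup_induction (motive := fun w => P j w = 0) _ hw ?_ ?_ ?_
    · intro l x hx
      by_cases hl : l ≤ k
      · rw [iSup_pos hl] at hx
        exact hPzero l j (ne_of_lt (lt_of_le_of_lt hl hkj)) x hx
      · rw [iSup_neg hl] at hx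
        rw [(Submodule.mem_bot ℂ).1 hx, map_zero]
    · exact map_zero _
    · intro x y hx hy
      rw [map_add, hx, hy, add_zero]
  constructor
  · -- bounded → stabilizes flag
    intro hbdd k v hv
    obtain ⟨C, hC⟩ := isBounded_iff_forall_norm_le.1 hbdd
    have hC0 : 0 ≤ C := le_trans (norm_nonneg _) (hC _ ⟨0, le_rfl, rfl⟩)
    refine Submodule.iSup_induction
      (motive := fun w => g w ∈ ⨆ j : Fin r, ⨆ _ : j ≤ k, E j) _ hv ?_ ?_ ?_
    · intro i x hx
      by_cases hik : i ≤ k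
      · rw [iSup_pos hik] at hx
        have hgx : (g : V →L[ℂ] V) x = ∑ j : Fin r, P j ((g : V →L[ℂ] V) x) :=
          (hsum _).symm
        have : g x = (g : V →L[ℂ] V) x := rfl
        rw [this, hgx]
        refine Submodule.sum_mem _ fun j _ => ?_
        by_cases hjk : j ≤ k
        · exact hVk k j hjk (hPmem j _)
        · suffices h0 : P j ((g : V →L[ℂ] V) x) = 0 by
            rw [h0]; exact zero_mem _
          by_contra hw
          have hwpos : 0 < ‖P j ((g : V →L[ℂ] V) x)‖ := norm_pos_iff.2 hw
          have hd : 0 < μ j - μ i :=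
            sub_pos.2 (hmono (lt_of_le_of_lt hik (not_le.1 hjk)))
          set B := ‖P j‖ * (C * ‖x‖) with hBdef
          have hB : 0 ≤ B := by positivity
          set t := (B / ‖P j ((g : V →L[ℂ] V) x)‖) / (μ j - μ i) with htdef
          have ht : 0 ≤ t := div_nonneg (div_nonneg hB hwpos.le) hd.le
          have hMt := hC _ ⟨t, ht, rfl⟩
          have h1 : ‖P j ((NormedSpace.exp (t • β) * (g : V →L[ℂ] V) *
              NormedSpace.exp (-(t • β))) x)‖ ≤ B := by
            calc ‖P j ((NormedSpace.exp (t • β) * (g : V →L[ℂ] V) *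
                NormedSpace.exp (-(t • β))) x)‖
                ≤ ‖P j‖ * ‖(NormedSpace.exp (t • β) * (g : V →L[ℂ] V) *
                  NormedSpace.exp (-(t • β))) x‖ := ContinuousLinearMap.le_opNorm _ _
              _ ≤ ‖P j‖ * (C * ‖x‖) := by
                  refine mul_le_mul_of_nonneg_left ?_ (norm_nonneg _)
                  calc ‖(NormedSpace.exp (t • β) * (g : V →L[ℂ] V) *
                      NormedSpace.exp (-(t • β))) x‖
                      ≤ ‖NormedSpace.exp (t • β) * (g : V →L[ℂ] V) *
                        NormedSpace.exp (-(t • β))‖ * ‖x‖ :=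
                        ContinuousLinearMap.le_opNorm _ _
                    _ ≤ C * ‖x‖ := mul_le_mul_of_nonneg_right hMt (norm_nonneg _)
          have h2 : ‖P j ((NormedSpace.exp (t • β) * (g : V →L[ℂ] V) *
              NormedSpace.exp (-(t • β))) x)‖ =
              Real.exp (t * (μ j - μ i)) * ‖P j ((g : V →L[ℂ] V) x)‖ := by
            rw [hMP t i x hx j, hnorm]
          have htd : t * (μ j - μ i) = B / ‖P j ((g : V →L[ℂ] V) x)‖ := by
            rw [htdef, div_mul_cancel₀ _ hd.ne']
          have hexp1 := Real.add_one_le_exp (t * (μ j - μ i))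
          have hgt : Real.exp (t * (μ j - μ i)) * ‖P j ((g : V →L[ℂ] V) x)‖ > B := by
            have h5 : (B / ‖P j ((g : V →L[ℂ] V) x)‖ + 1) * ‖P j ((g : V →L[ℂ] V) x)‖ =
                B + ‖P j ((g : V →L[ℂ] V) x)‖ := by
              rw [add_mul, one_mul, div_mul_cancel₀ _ hwpos.ne']
            calc Real.exp (t * (μ j - μ i)) * ‖P j ((g : V →L[ℂ] V) x)‖
                ≥ (t * (μ j - μ i) + 1) * ‖P j ((g : V →L[ℂ] V) x)‖ :=
                  mul_le_mul_of_nonneg_right hexp1 hwpos.le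
              _ = B + ‖P j ((g : V →L[ℂ] V) x)‖ := by rw [htd, h5]
              _ > B := by linarith
          rw [h2] at h1
          linarith
      · rw [iSup_neg hik] at hx
        rw [(Submodule.mem_bot ℂ).1 hx, map_zero]
        exact zero_mem _
    · simp only [map_zero]
      exact zero_mem _
    · intro x y hx hy
      simp only [map_add]
      exact add_mem hx hy
  · -- stabilizes flag → bounded
    intro hstab
    have hzero2 : ∀ (i j : Fin r), i < j → ∀ x ∈ E i, P j ((g : V →L[ℂ] V) x) = 0 := by
      intro i j hij x hx
      have h1 : x ∈ ⨆ j : Fin r, ⨆ _ : j ≤ i, E j := hVk i i le_rfl hx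
      have h2 := hstab i x h1
      have h3 : (g : V →L[ℂ] V) x = g x := rfl
      rw [h3]
      exact hflag i j hij _ h2
    rw [isBounded_iff_forall_norm_le]
    refine ⟨∑ i : Fin r, ∑ j : Fin r, ‖P j‖ * (‖(g : V →L[ℂ] V)‖ * ‖P i‖), ?_⟩
    rintro M ⟨t, ht, rfl⟩
    refine ContinuousLinearMap.opNorm_le_bound _ (by positivity) fun v => ?_
    set MT := NormedSpace.exp (t • β) * (g : V →L[ℂ] V) * NormedSpace.exp (-(t • β))
      with hMT
    calc ‖MT v‖ = ‖∑ i : Fin r, MT (P i v)‖ := by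
          conv_lhs => rw [← hsum v]
          rw [map_sum]
      _ ≤ ∑ i : Fin r, ‖MT (P i v)‖ := norm_sum_le _ _
      _ ≤ ∑ i : Fin r, ∑ j : Fin r, (‖P j‖ * (‖(g : V →L[ℂ] V)‖ * ‖P i‖)) * ‖v‖ := by
          refine Finset.sum_le_sum fun i _ => ?_
          rw [hMT, hM t i (P i v) (hPmem i v)]
          calc ‖∑ j : Fin r, Complex.exp ((t * (μ j - μ i) : ℝ) : ℂ) •
              P j ((g : V →L[ℂ] V) (P i v))‖
              ≤ ∑ j : Fin r, ‖Complex.exp ((t * (μ j - μ i) : ℝ) : ℂ) •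
                P j ((g : V →L[ℂ] V) (P i v))‖ := norm_sum_le _ _
            _ ≤ ∑ j : Fin r, (‖P j‖ * (‖(g : V →L[ℂ] V)‖ * ‖P i‖)) * ‖v‖ := by
                refine Finset.sum_le_sum fun j _ => ?_
                rw [hnorm]
                by_cases hji : j ≤ i
                · have hle : t * (μ j - μ i) ≤ 0 :=
                    mul_nonpos_of_nonneg_of_nonpos ht
                      (sub_nonpos.2 (hmono.monotone hji))
                  have he1 : Real.exp (t * (μ j - μ i)) ≤ 1 := Real.exp_le_one_iff.2 hle
                  have hb : ‖P j ((g : V →L[ℂ] V) (P i v))‖ ≤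
                      (‖P j‖ * (‖(g : V →L[ℂ] V)‖ * ‖P i‖)) * ‖v‖ := by
                    calc ‖P j ((g : V →L[ℂ] V) (P i v))‖
                        ≤ ‖P j‖ * ‖(g : V →L[ℂ] V) (P i v)‖ :=
                          ContinuousLinearMap.le_opNorm _ _
                      _ ≤ ‖P j‖ * (‖(g : V →L[ℂ] V)‖ * ‖P i v‖) :=
                          mul_le_mul_of_nonneg_left
                            (ContinuousLinearMap.le_opNorm _ _) (norm_nonneg _)
                      _ ≤ ‖P j‖ * (‖(g : V →L[ℂ] V)‖ * (‖P i‖ * ‖v‖)) := by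
                          refine mul_le_mul_of_nonneg_left ?_ (norm_nonneg _)
                          exact mul_le_mul_of_nonneg_left
                            (ContinuousLinearMap.le_opNorm _ _) (norm_nonneg _)
                      _ = (‖P j‖ * (‖(g : V →L[ℂ] V)‖ * ‖P i‖)) * ‖v‖ := by ring
                  calc Real.exp (t * (μ j - μ i)) * ‖P j ((g : V →L[ℂ] V) (P i v))‖
                      ≤ 1 * ‖P j ((g : V →L[ℂ] V) (P i v))‖ :=
                        mul_le_mul_of_nonneg_right he1 (norm_nonneg _)
                    _ = ‖P j ((g : V →L[ℂ] V) (P i v))‖ := one_mul _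
                    _ ≤ _ := hb
                · have hij : i < j := not_le.1 hji
                  rw [hzero2 i j hij (P i v) (hPmem i v), norm_zero, mul_zero]
                  positivity
      _ = (∑ i : Fin r, ∑ j : Fin r, ‖P j‖ * (‖(g : V →L[ℂ] V)‖ * ‖P i‖)) * ‖v‖ := by
          rw [Finset.sum_mul]
          exact Finset.sum_congr rfl fun i _ => (Finset.sum_mul _ _ _).symm
end

section
/- Every representation φ ∈ Rep(Q,n) admits a unique filtration 0 = M⁰ ⊊ M¹ ⊊ ... ⊊ Mˢ = (V_i)_{i∈I} by subrepresentations of φ such that each successive quotient Mʲ/Mʲ⁻¹ is semistable and the slopes strictly decrease: s(M¹/M⁰) > s(M²/M¹) > ... > s(Mˢ/Mˢ⁻¹). (This is the Harder–Narasimhan filtration of φ.) -/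
open Matrix

/-- Pointwise containment of families of subspaces. -/
def famLE {I : Type} {n : I → ℕ} (N M : ∀ i : I, Submodule ℂ (Fin (n i) → ℂ)) : Prop :=
  ∀ i, N i ≤ M i

/-- The slope `s(M/N) = (∑ᵢ θᵢ (dim Mᵢ − dim Nᵢ)) / (∑ᵢ (dim Mᵢ − dim Nᵢ))` of a quotient. -/
noncomputable def slopeQuot {I : Type} [Fintype I] (n : I → ℕ) (θ : I → ℤ)
    (N M : ∀ i : I, Submodule ℂ (Fin (n i) → ℂ)) : ℚ :=
  ((∑ i : I, θ i * ((Module.finrank ℂ (M i) : ℤ) - (Module.finrank ℂ (N i) : ℤ)) : ℤ) : ℚ) /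
    ((∑ i : I, ((Module.finrank ℂ (M i) : ℤ) - (Module.finrank ℂ (N i) : ℤ)) : ℤ) : ℚ)

/-- Semistability of the quotient `M/N` (for subrepresentations `N ⊆ M` of `φ`):
`s(P/N) ≤ s(M/N)` for every subrepresentation `P` of `φ` with `N ⊆ P ⊆ M`, `P ≠ N`. -/
def quotSemistable {I A : Type} [Fintype I] (hd tl : A → I) (n : I → ℕ) (θ : I → ℤ)
    (φ : QRep hd tl n) (N M : ∀ i : I, Submodule ℂ (Fin (n i) → ℂ)) : Prop :=
  ∀ P : ∀ i : I, Submodule ℂ (Fin (n i) → ℂ), qIsSubrep hd tl n φ P →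
    famLE N P → famLE P M → P ≠ N → slopeQuot n θ N P ≤ slopeQuot n θ N M

namespace HN

variable {I A : Type} [Fintype I] (hd tl : A → I) (n : I → ℕ) (θ : I → ℤ)

abbrev Fam (n : I → ℕ) := ∀ i : I, Submodule ℂ (Fin (n i) → ℂ)

noncomputable def rk (W : Fam n) : ℤ := ∑ i, (Module.finrank ℂ (W i) : ℤ)

noncomputable def dg (W : Fam n) : ℤ := ∑ i, θ i * (Module.finrank ℂ (W i) : ℤ)

lemma slopeQuot_eq (N M : Fam n) :
    slopeQuot n θ N M = ((dg n θ M - dg n θ N : ℤ) : ℚ) / ((rk n M - rk n N : ℤ) : ℚ) := by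
  unfold slopeQuot dg rk
  congr 2 <;> rw [← Finset.sum_sub_distrib] <;> exact Finset.sum_congr rfl fun i _ => by ring

lemma famLE_antisymm {N M : Fam n} (h1 : famLE N M) (h2 : famLE M N) : N = M :=
  funext fun i => le_antisymm (h1 i) (h2 i)

lemma famLE_refl (N : Fam n) : famLE N N := fun _ => le_rfl

lemma famLE_trans {N P M : Fam n} (h1 : famLE N P) (h2 : famLE P M) : famLE N M :=
  fun i => (h1 i).trans (h2 i)

lemma rk_mono {N M : Fam n} (h : famLE N M) : rk n N ≤ rk n M :=
  Finset.sum_le_sum fun i _ => by exact_mod_cast Submodule.finrank_mono (h i)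

lemma rk_lt {N M : Fam n} (h : famLE N M) (hne : N ≠ M) : rk n N < rk n M := by
  obtain ⟨i, hi⟩ : ∃ i, N i ≠ M i := by
    by_contra h'; push_neg at h'; exact hne (funext h')
  refine Finset.sum_lt_sum (fun i _ => by exact_mod_cast Submodule.finrank_mono (h i))
    ⟨i, Finset.mem_univ i, ?_⟩
  exact_mod_cast Submodule.finrank_lt_finrank_of_lt (lt_of_le_of_ne (h i) hi)

lemma rk_nonneg (W : Fam n) : 0 ≤ rk n W :=
  Finset.sum_nonneg fun i _ => by positivity

lemma famLE_top (W : Fam n) : famLE W (fun _ => ⊤) := fun i => le_top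

lemma top_of_famLE_top {W : Fam n} (h : famLE (fun _ => ⊤) W) : W = fun _ => ⊤ :=
  famLE_antisymm n (famLE_top n W) h

lemma rk_le_top (W : Fam n) : rk n W ≤ rk n (fun _ => ⊤) :=
  rk_mono n (famLE_top n W)

lemma dg_mod (W W' : Fam n) :
    dg n θ (fun i => W i ⊔ W' i) + dg n θ (fun i => W i ⊓ W' i) = dg n θ W + dg n θ W' := by
  unfold dg
  rw [← Finset.sum_add_distrib, ← Finset.sum_add_distrib]
  refine Finset.sum_congr rfl fun i _ => ?_
  have h := Submodule.finrank_sup_add_finrank_inf_eq (W i) (W' i)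
  have h2 : ((Module.finrank ℂ ↥((W i) ⊔ (W' i)) : ℤ)) + (Module.finrank ℂ ↥((W i) ⊓ (W' i)) : ℤ)
      = (Module.finrank ℂ ↥(W i) : ℤ) + (Module.finrank ℂ ↥(W' i) : ℤ) := by exact_mod_cast h
  linear_combination (θ i) * h2

lemma rk_mod (W W' : Fam n) :
    rk n (fun i => W i ⊔ W' i) + rk n (fun i => W i ⊓ W' i) = rk n W + rk n W' := by
  unfold rk
  rw [← Finset.sum_add_distrib, ← Finset.sum_add_distrib]
  refine Finset.sum_congr rfl fun i _ => ?_
  have h := Submodule.finrank_sup_add_finrank_inf_eq (W i) (W' i)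
  exact_mod_cast h

lemma dg_abs (W : Fam n) : |dg n θ W| ≤ ∑ i, |θ i| * (n i : ℤ) := by
  refine (Finset.abs_sum_le_sum_abs _ _).trans (Finset.sum_le_sum fun i _ => ?_)
  rw [abs_mul]
  have hle : (Module.finrank ℂ (W i) : ℤ) ≤ (n i : ℤ) := by
    have := Submodule.finrank_le (W i)
    simpa [Module.finrank_pi] using this
  have : |(Module.finrank ℂ (W i) : ℤ)| ≤ (n i : ℤ) := by
    rwa [abs_of_nonneg (by positivity)]
  exact mul_le_mul_of_nonneg_left this (abs_nonneg _)

lemma rk_lt_denom {N M : Fam n} (h : famLE N M) (hne : N ≠ M) :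
    (0 : ℚ) < ((rk n M - rk n N : ℤ) : ℚ) := by
  exact_mod_cast sub_pos.2 (rk_lt n h hne)

lemma slope_le_iff {N M : Fam n} (h : famLE N M) (hne : N ≠ M) {μ : ℚ} :
    slopeQuot n θ N M ≤ μ ↔
      ((dg n θ M - dg n θ N : ℤ) : ℚ) ≤ μ * ((rk n M - rk n N : ℤ) : ℚ) := by
  rw [slopeQuot_eq, div_le_iff₀ (rk_lt_denom n h hne)]

lemma slope_lt_iff {N M : Fam n} (h : famLE N M) (hne : N ≠ M) {μ : ℚ} :
    slopeQuot n θ N M < μ ↔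
      ((dg n θ M - dg n θ N : ℤ) : ℚ) < μ * ((rk n M - rk n N : ℤ) : ℚ) := by
  rw [slopeQuot_eq, div_lt_iff₀ (rk_lt_denom n h hne)]

lemma le_slope_iff {N M : Fam n} (h : famLE N M) (hne : N ≠ M) {μ : ℚ} :
    μ ≤ slopeQuot n θ N M ↔
      μ * ((rk n M - rk n N : ℤ) : ℚ) ≤ ((dg n θ M - dg n θ N : ℤ) : ℚ) := by
  rw [slopeQuot_eq, le_div_iff₀ (rk_lt_denom n h hne)]

lemma slope_eq_iff {N M : Fam n} (h : famLE N M) (hne : N ≠ M) {μ : ℚ} :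
    slopeQuot n θ N M = μ ↔
      ((dg n θ M - dg n θ N : ℤ) : ℚ) = μ * ((rk n M - rk n N : ℤ) : ℚ) := by
  rw [slopeQuot_eq, div_eq_iff (ne_of_gt (rk_lt_denom n h hne))]

end HN
namespace HN

variable {I A : Type} [Fintype I] (hd tl : A → I) (n : I → ℕ) (θ : I → ℤ)

lemma subrep_bot (φ : QRep hd tl n) : qIsSubrep hd tl n φ (fun _ => ⊥) := by
  intro α v hv
  simp only [Submodule.mem_bot] at hv
  simp [hv, Matrix.mulVec_zero]

lemma subrep_top (φ : QRep hd tl n) : qIsSubrep hd tl n φ (fun _ => ⊤) := by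
  intro α v _; exact Submodule.mem_top

lemma subrep_inf {φ : QRep hd tl n} {W W' : Fam n} (h : qIsSubrep hd tl n φ W)
    (h' : qIsSubrep hd tl n φ W') : qIsSubrep hd tl n φ (fun i => W i ⊓ W' i) := by
  intro α v hv
  exact ⟨h α v hv.1, h' α v hv.2⟩

lemma subrep_sup {φ : QRep hd tl n} {W W' : Fam n} (h : qIsSubrep hd tl n φ W)
    (h' : qIsSubrep hd tl n φ W') : qIsSubrep hd tl n φ (fun i => W i ⊔ W' i) := by
  intro α v hv
  obtain ⟨x, hx, y, hy, rfl⟩ := Submodule.mem_sup.1 hv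
  rw [Matrix.mulVec_add]
  exact Submodule.add_mem _ (Submodule.mem_sup_left (h α x hx))
    (Submodule.mem_sup_right (h' α y hy))

lemma exists_max_of_finite {β : Type} [LinearOrder β] {s : Set β} (hf : s.Finite)
    (hn : s.Nonempty) : ∃ a ∈ s, ∀ b ∈ s, b ≤ a := by
  obtain ⟨a, ha, hmax⟩ := Set.Finite.exists_maximalFor id s hf hn
  refine ⟨a, ha, fun b hb => ?_⟩
  by_contra hlt
  exact hlt (hmax hb (not_le.1 hlt).le)

/-- The slope/rank modularity for the sup/inf. -/
lemma slope_mod (P L : Fam n) :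
    (dg n θ P - dg n θ (fun i => P i ⊓ L i)) = dg n θ (fun i => P i ⊔ L i) - dg n θ L ∧
    (rk n P - rk n (fun i => P i ⊓ L i)) = rk n (fun i => P i ⊔ L i) - rk n L := by
  constructor
  · have := dg_mod n θ P L; linarith
  · have := rk_mod n P L; linarith

/-- Slope values of subfamilies lie in a finite set. -/
lemma slope_finite (N : Fam n) :
    {q : ℚ | ∃ M : Fam n, famLE N M ∧ M ≠ N ∧ q = slopeQuot n θ N M}.Finite := by
  set B : ℤ := ∑ i, |θ i| * (n i : ℤ) with hB
  set R : ℤ := rk n (fun _ => ⊤) with hR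
  have : {q : ℚ | ∃ M : Fam n, famLE N M ∧ M ≠ N ∧ q = slopeQuot n θ N M} ⊆
      (fun p : ℤ × ℤ => ((p.1 : ℚ) / (p.2 : ℚ))) ''
        ((Set.Icc (-(2*B)) (2*B)) ×ˢ (Set.Icc 1 R)) := by
    rintro q ⟨M, hle, hne, rfl⟩
    refine ⟨(dg n θ M - dg n θ N, rk n M - rk n N), ⟨?_, ?_⟩, (slopeQuot_eq n θ N M).symm⟩
    · have h1 := dg_abs n θ M
      have h2 := dg_abs n θ N
      rw [Set.mem_Icc]
      constructor <;> [skip; skip] <;>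
        · have := abs_le.1 h1; have := abs_le.1 h2; omega
    · exact Set.mem_Icc.2 ⟨by have := rk_lt n hle (Ne.symm hne); omega, by
        have := rk_le_top n M
        have := rk_nonneg n N
        omega⟩
  exact Set.Finite.subset (Set.Finite.image _ ((Set.finite_Icc _ _).prod (Set.finite_Icc _ _))) this

/-- Existence of the maximal destabilizing subrepresentation above `N`. -/
lemma exists_MD (φ : QRep hd tl n) (N : Fam n) (hNsub : qIsSubrep hd tl n φ N)
    (hNtop : N ≠ fun _ => (⊤ : Submodule ℂ _)) :
    ∃ P : Fam n, qIsSubrep hd tl n φ P ∧ famLE N P ∧ P ≠ N ∧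
      (∀ Q : Fam n, qIsSubrep hd tl n φ Q → famLE N Q → Q ≠ N →
        slopeQuot n θ N Q ≤ slopeQuot n θ N P) ∧
      (∀ Q : Fam n, qIsSubrep hd tl n φ Q → famLE N Q → Q ≠ N →
        slopeQuot n θ N P ≤ slopeQuot n θ N Q → famLE Q P) := by
  classical
  set S : Set (Fam n) := {P | qIsSubrep hd tl n φ P ∧ famLE N P ∧ P ≠ N} with hS
  have hStop : (fun _ => (⊤ : Submodule ℂ _)) ∈ S :=
    ⟨subrep_top hd tl n φ, famLE_top n N, Ne.symm hNtop⟩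
  -- maximal slope μ
  have hVfin : ((fun P => slopeQuot n θ N P) '' S).Finite := by
    refine (slope_finite n θ N).subset ?_
    rintro q ⟨M, hM, rfl⟩
    exact ⟨M, hM.2.1, hM.2.2, rfl⟩
  obtain ⟨μ, ⟨P0, hP0, hP0μ⟩, hμmax⟩ :=
    exists_max_of_finite hVfin ⟨_, Set.mem_image_of_mem _ hStop⟩
  -- among those of slope μ, maximal rank
  set S2 : Set (Fam n) := {P | P ∈ S ∧ slopeQuot n θ N P = μ} with hS2
  have hS2ne : P0 ∈ S2 := ⟨hP0, hP0μ⟩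
  have hV2fin : ((fun P => rk n P) '' S2).Finite := by
    refine (Set.finite_Icc (0 : ℤ) (rk n (fun _ => ⊤))).subset ?_
    rintro r ⟨M, hM, rfl⟩
    exact Set.mem_Icc.2 ⟨rk_nonneg n M, rk_le_top n M⟩
  obtain ⟨r, ⟨P, hP, hPr⟩, hrmax⟩ :=
    exists_max_of_finite hV2fin ⟨_, Set.mem_image_of_mem _ hS2ne⟩
  obtain ⟨⟨hPsub, hPle, hPne⟩, hPμ⟩ := hP
  have hslope : ∀ Q : Fam n, qIsSubrep hd tl n φ Q → famLE N Q → Q ≠ N →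
      slopeQuot n θ N Q ≤ slopeQuot n θ N P := by
    intro Q hQ hle hne
    rw [hPμ]
    exact hμmax _ ⟨Q, ⟨hQ, hle, hne⟩, rfl⟩
  refine ⟨P, hPsub, hPle, hPne, hslope, ?_⟩
  -- maximality among slope-μ subreps
  intro Q hQsub hQle hQne hge
  have hQμ : slopeQuot n θ N Q = μ := by
    have h1 := (hslope Q hQsub hQle hQne).trans_eq hPμ
    rw [hPμ] at hge
    exact le_antisymm h1 hge
  by_contra hcon
  -- U = Q ⊔ P, T = Q ⊓ P
  set U : Fam n := fun i => Q i ⊔ P i with hU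
  set T : Fam n := fun i => Q i ⊓ P i with hT
  have hUsub : qIsSubrep hd tl n φ U := subrep_sup hd tl n hQsub hPsub
  have hTsub : qIsSubrep hd tl n φ T := subrep_inf hd tl n hQsub hPsub
  have hPU : famLE P U := fun i => le_sup_right
  have hQU : famLE Q U := fun i => le_sup_left
  have hNU : famLE N U := famLE_trans n hPle hPU
  have hNT : famLE N T := fun i => le_inf (hQle i) (hPle i)
  have hTQ : famLE T Q := fun i => inf_le_left
  have hUN : U ≠ N := by
    intro h
    exact hPne (famLE_antisymm n (h ▸ hPU) hPle)
  have hPUne : P ≠ U := by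
    intro h
    exact hcon (fun i => (hQU i).trans_eq (congrFun h.symm i))
  have hTQne : T ≠ Q := by
    intro h
    exact hcon (fun i => by
      have : Q i ⊓ P i = Q i := congrFun h i
      exact inf_eq_left.1 this)
  -- linear inequalities
  have eP : ((dg n θ P - dg n θ N : ℤ) : ℚ) = μ * ((rk n P - rk n N : ℤ) : ℚ) :=
    (slope_eq_iff n θ hPle (Ne.symm hPne)).1 hPμ
  have eQ : ((dg n θ Q - dg n θ N : ℤ) : ℚ) = μ * ((rk n Q - rk n N : ℤ) : ℚ) :=
    (slope_eq_iff n θ hQle (Ne.symm hQne)).1 hQμ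
  have eT : ((dg n θ T - dg n θ N : ℤ) : ℚ) ≤ μ * ((rk n T - rk n N : ℤ) : ℚ) := by
    by_cases hTN : T = N
    · rw [hTN]; simp
    · exact (slope_le_iff n θ hNT (Ne.symm hTN)).1 (by rw [← hPμ]; exact hslope T hTsub hNT hTN)
  have hmodd := dg_mod n θ Q P
  have hmodr := rk_mod n Q P
  -- μ ≤ slope N U
  have hUslope : μ ≤ slopeQuot n θ N U := by
    rw [le_slope_iff n θ hNU (Ne.symm hUN)]
    have hd' : ((dg n θ U - dg n θ N : ℤ) : ℚ)
        = ((dg n θ Q - dg n θ N : ℤ) : ℚ) + ((dg n θ P - dg n θ N : ℤ) : ℚ)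
          - ((dg n θ T - dg n θ N : ℤ) : ℚ) := by
      push_cast
      have : (dg n θ U : ℚ) + (dg n θ T : ℚ) = (dg n θ Q : ℚ) + (dg n θ P : ℚ) := by
        exact_mod_cast hmodd
      linarith
    have hr' : ((rk n U - rk n N : ℤ) : ℚ)
        = ((rk n Q - rk n N : ℤ) : ℚ) + ((rk n P - rk n N : ℤ) : ℚ)
          - ((rk n T - rk n N : ℤ) : ℚ) := by
      push_cast
      have : (rk n U : ℚ) + (rk n T : ℚ) = (rk n Q : ℚ) + (rk n P : ℚ) := by
        exact_mod_cast hmodr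
      linarith
    rw [hd', hr']
    nlinarith [eP, eQ, eT]
  have hUle : slopeQuot n θ N U ≤ μ := by rw [← hPμ]; exact hslope U hUsub hNU hUN
  have hUμ : slopeQuot n θ N U = μ := le_antisymm hUle hUslope
  have hrU : rk n U ≤ r := hrmax _ ⟨U, ⟨⟨hUsub, hNU, hUN⟩, hUμ⟩, rfl⟩
  have : rk n P < rk n U := rk_lt n hPU hPUne
  have hPr' : rk n P = r := hPr
  omega

end HN
namespace HN

variable {I A : Type} [Fintype I] (hd tl : A → I) (n : I → ℕ) (θ : I → ℤ)

/-- monotone chain for a filtration -/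
lemma chain_le (L : ℕ → Fam n) (k : ℕ)
    (hmono : ∀ j, j < k → famLE (L j) (L (j+1)) ∧ L j ≠ L (j+1)) :
    ∀ a b, a ≤ b → b ≤ k → famLE (L a) (L b) := by
  intro a b
  induction b with
  | zero => intro hab _; have ha : a = 0 := Nat.le_zero.1 hab; subst ha; exact famLE_refl n _
  | succ b ih =>
    intro hab hbk
    by_cases h : a = b + 1
    · subst h; exact famLE_refl n _
    · have h1 : a ≤ b := by omega
      exact famLE_trans n (ih h1 (by omega)) (hmono b (by omega)).1

/-- The key lemma: for a filtration with semistable quotients and strictly decreasing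
slopes, the first step is the maximal destabilizing subobject. -/
lemma first_step (φ : QRep hd tl n) (L : ℕ → Fam n) (k : ℕ) (hk : 1 ≤ k)
    (hsub : ∀ j, qIsSubrep hd tl n φ (L j))
    (hmono : ∀ j, j < k → famLE (L j) (L (j+1)) ∧ L j ≠ L (j+1))
    (htop : L k = fun _ => ⊤)
    (hss : ∀ j, j < k → quotSemistable hd tl n θ φ (L j) (L (j+1)))
    (hdec : ∀ j, j + 2 ≤ k →
      slopeQuot n θ (L (j+1)) (L (j+2)) < slopeQuot n θ (L j) (L (j+1))) :
    ∀ P : Fam n, qIsSubrep hd tl n φ P → famLE (L 0) P → P ≠ L 0 →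
      slopeQuot n θ (L 0) P ≤ slopeQuot n θ (L 0) (L 1) ∧
      (slopeQuot n θ (L 0) (L 1) ≤ slopeQuot n θ (L 0) P → famLE P (L 1)) := by
  set μ1 := slopeQuot n θ (L 0) (L 1) with hμ1
  have chain : ∀ j, j + 1 ≤ k →
      slopeQuot n θ (L j) (L (j+1)) ≤ μ1 ∧
        (1 ≤ j → slopeQuot n θ (L j) (L (j+1)) < μ1) := by
    intro j
    induction j with
    | zero => intro _; exact ⟨le_rfl, by omega⟩
    | succ j ih =>
      intro hjk
      have h1 : slopeQuot n θ (L (j+1)) (L (j+2)) < slopeQuot n θ (L j) (L (j+1)) :=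
        hdec j (by omega)
      have h2 := (ih (by omega)).1
      exact ⟨(h1.trans_le h2).le, fun _ => h1.trans_le h2⟩
  have aux : ∀ j, j ≤ k → ∀ P : Fam n, qIsSubrep hd tl n φ P → famLE (L 0) P →
      P ≠ L 0 → famLE P (L j) → famLE P (L 1) ∨ slopeQuot n θ (L 0) P < μ1 := by
    intro j
    induction j with
    | zero =>
      intro _ P _ hP0 hPne hPL
      exact absurd (famLE_antisymm n hPL hP0) hPne
    | succ j ih =>
      intro hjk P hPsub hP0 hPne hPLj1
      by_cases hcase : famLE P (L j)
      · exact ih (by omega) P hPsub hP0 hPne hcase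
      by_cases hj0 : j = 0
      · subst hj0; exact Or.inl hPLj1
      right
      set T : Fam n := fun i => P i ⊓ L j i with hT
      set U : Fam n := fun i => P i ⊔ L j i with hU
      have hTsub : qIsSubrep hd tl n φ T := subrep_inf hd tl n hPsub (hsub j)
      have hUsub : qIsSubrep hd tl n φ U := subrep_sup hd tl n hPsub (hsub j)
      have hLjU : famLE (L j) U := fun i => le_sup_right
      have hULj1 : famLE U (L (j+1)) := fun i => sup_le (hPLj1 i) ((hmono j (by omega)).1 i)
      have hUne : U ≠ L j := fun h => hcase (fun i => (le_sup_left).trans_eq (congrFun h i))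
      have hssj : slopeQuot n θ (L j) U ≤ slopeQuot n θ (L j) (L (j+1)) :=
        hss j (by omega) U hUsub hLjU hULj1 hUne
      have hchain : slopeQuot n θ (L j) (L (j+1)) < μ1 :=
        (chain j (by omega)).2 (by omega)
      have hTP : famLE T P := fun i => inf_le_left
      have hTPne : T ≠ P := fun h => hcase (fun i => inf_eq_left.1 (congrFun h i))
      have hmod := slope_mod n θ P (L j)
      have hTPslope : slopeQuot n θ T P = slopeQuot n θ (L j) U := by
        rw [slopeQuot_eq, slopeQuot_eq, hmod.1, hmod.2]
      have hTPlt : slopeQuot n θ T P < μ1 := by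
        rw [hTPslope]; exact hssj.trans_lt hchain
      have hL0Lj : famLE (L 0) (L j) := chain_le n L k hmono 0 j (by omega) (by omega)
      have hL0T : famLE (L 0) T := fun i => le_inf (hP0 i) (hL0Lj i)
      by_cases hTL0 : T = L 0
      · have : slopeQuot n θ (L 0) P = slopeQuot n θ T P := by rw [hTL0]
        rw [this]; exact hTPlt
      · have hIH := ih (by omega) T hTsub hL0T hTL0 (fun i => inf_le_right)
        have hTle : slopeQuot n θ (L 0) T ≤ μ1 := by
          rcases hIH with h | h
          · exact hss 0 (by omega) T hTsub hL0T h hTL0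
          · exact h.le
        rw [slope_lt_iff n θ hP0 (Ne.symm hPne)]
        have e1 := (slope_le_iff n θ hL0T (Ne.symm hTL0)).1 hTle
        have e2 := (slope_lt_iff n θ hTP hTPne).1 hTPlt
        push_cast at e1 e2 ⊢
        linarith
  intro P hPsub hP0 hPne
  have hPtop : famLE P (L k) := by rw [htop]; exact famLE_top n P
  have hdisj := aux k le_rfl P hPsub hP0 hPne hPtop
  have hle : slopeQuot n θ (L 0) P ≤ μ1 := by
    rcases hdisj with h | h
    · exact hss 0 (by omega) P hPsub hP0 h hPne
    · exact h.le
  refine ⟨hle, fun hge => ?_⟩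
  rcases hdisj with h | h
  · exact h
  · exact absurd hge (not_le.2 h)

end HN
namespace HN

variable {I A : Type} [Fintype I] (hd tl : A → I) (n : I → ℕ) (θ : I → ℤ)

open Classical in
/-- The Harder–Narasimhan filtration, built step by step via maximal destabilizing
subrepresentations. -/
noncomputable def HNs (φ : QRep hd tl n) : ℕ → {W : Fam n // qIsSubrep hd tl n φ W}
  | 0 => ⟨fun _ => ⊥, subrep_bot hd tl n φ⟩
  | (j+1) =>
    if h : (HNs φ j).1 = (fun _ => ⊤) then ⟨fun _ => ⊤, subrep_top hd tl n φ⟩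
    else ⟨Classical.choose (exists_MD hd tl n θ φ (HNs φ j).1 (HNs φ j).2 h),
      (Classical.choose_spec (exists_MD hd tl n θ φ (HNs φ j).1 (HNs φ j).2 h)).1⟩

lemma HNs_zero (φ : QRep hd tl n) : (HNs hd tl n θ φ 0).1 = fun _ => ⊥ := by
  rw [HNs]

lemma HNs_succ_of_top (φ : QRep hd tl n) (j : ℕ)
    (h : (HNs hd tl n θ φ j).1 = fun _ => ⊤) :
    (HNs hd tl n θ φ (j+1)).1 = fun _ => ⊤ := by
  rw [HNs, dif_pos h]

lemma HNs_succ_spec (φ : QRep hd tl n) (j : ℕ)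
    (h : (HNs hd tl n θ φ j).1 ≠ fun _ => ⊤) :
    famLE (HNs hd tl n θ φ j).1 (HNs hd tl n θ φ (j+1)).1 ∧
    (HNs hd tl n θ φ (j+1)).1 ≠ (HNs hd tl n θ φ j).1 ∧
    (∀ Q : Fam n, qIsSubrep hd tl n φ Q → famLE (HNs hd tl n θ φ j).1 Q →
      Q ≠ (HNs hd tl n θ φ j).1 →
      slopeQuot n θ (HNs hd tl n θ φ j).1 Q ≤
        slopeQuot n θ (HNs hd tl n θ φ j).1 (HNs hd tl n θ φ (j+1)).1) ∧
    (∀ Q : Fam n, qIsSubrep hd tl n φ Q → famLE (HNs hd tl n θ φ j).1 Q →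
      Q ≠ (HNs hd tl n θ φ j).1 →
      slopeQuot n θ (HNs hd tl n θ φ j).1 (HNs hd tl n θ φ (j+1)).1 ≤
        slopeQuot n θ (HNs hd tl n θ φ j).1 Q →
      famLE Q (HNs hd tl n θ φ (j+1)).1) := by
  have he : (HNs hd tl n θ φ (j+1)).1 =
      Classical.choose (exists_MD hd tl n θ φ (HNs hd tl n θ φ j).1 (HNs hd tl n θ φ j).2 h) := by
    rw [HNs, dif_neg h]
  rw [he]
  exact (Classical.choose_spec
    (exists_MD hd tl n θ φ (HNs hd tl n θ φ j).1 (HNs hd tl n θ φ j).2 h)).2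

lemma HNs_growth (φ : QRep hd tl n) :
    ∀ j : ℕ, (HNs hd tl n θ φ j).1 = (fun _ => ⊤) ∨ (j : ℤ) ≤ rk n (HNs hd tl n θ φ j).1 := by
  intro j
  induction j with
  | zero => right; simpa using rk_nonneg n (HNs hd tl n θ φ 0).1
  | succ j ih =>
    by_cases h : (HNs hd tl n θ φ j).1 = fun _ => ⊤
    · left; exact HNs_succ_of_top hd tl n θ φ j h
    · rcases ih with h' | h'
      · exact absurd h' h
      · right
        obtain ⟨hle, hne, -, -⟩ := HNs_succ_spec hd tl n θ φ j h
        have := rk_lt n hle (Ne.symm hne)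
        push_cast
        omega

lemma HNs_top (φ : QRep hd tl n) : ∃ j : ℕ, (HNs hd tl n θ φ j).1 = fun _ => ⊤ := by
  refine ⟨(rk n (fun _ => ⊤)).toNat + 1, ?_⟩
  rcases HNs_growth hd tl n θ φ ((rk n (fun _ => ⊤)).toNat + 1) with h | h
  · exact h
  · exfalso
    have h1 := rk_le_top n (HNs hd tl n θ φ ((rk n (fun _ => ⊤)).toNat + 1)).1
    have h2 := rk_nonneg n (fun _ => (⊤ : Submodule ℂ _) : Fam n)
    push_cast at h
    omega

end HN
/-- Existence and uniqueness of the Harder–Narasimhan filtration: every representation `φ`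
admits a unique filtration `0 = M⁰ ⊊ M¹ ⊊ ... ⊊ Mˢ = V` by subrepresentations with
semistable successive quotients of strictly decreasing slopes.  (The filtration is encoded
as a pair `(s, M)` with `M : ℕ → (families of subspaces)` constantly equal to `V` from
stage `s` on.) -/
theorem statement11 {I A : Type} [Fintype I] [Fintype A] (hd tl : A → I) (n : I → ℕ)
    (θ : I → ℤ) (φ : QRep hd tl n) :
    ∃! sM : ℕ × (ℕ → ∀ i : I, Submodule ℂ (Fin (n i) → ℂ)),
      (sM.2 0 = fun _ => ⊥) ∧
      (∀ j : ℕ, qIsSubrep hd tl n φ (sM.2 j)) ∧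
      (∀ j : ℕ, sM.1 ≤ j → sM.2 j = fun _ => ⊤) ∧
      (∀ j : ℕ, j < sM.1 → famLE (sM.2 j) (sM.2 (j + 1)) ∧ sM.2 j ≠ sM.2 (j + 1)) ∧
      (∀ j : ℕ, j < sM.1 → quotSemistable hd tl n θ φ (sM.2 j) (sM.2 (j + 1))) ∧
      (∀ j : ℕ, j + 2 ≤ sM.1 →
        slopeQuot n θ (sM.2 (j + 1)) (sM.2 (j + 2)) <
          slopeQuot n θ (sM.2 j) (sM.2 (j + 1))) := by
  classical
  set M : ℕ → HN.Fam n := fun j => (HN.HNs hd tl n θ φ j).1 with hM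
  have htopex : ∃ j : ℕ, M j = fun _ => ⊤ := HN.HNs_top hd tl n θ φ
  set s : ℕ := Nat.find htopex with hs
  have hstop : M s = fun _ => ⊤ := Nat.find_spec htopex
  have hlt : ∀ j, j < s → M j ≠ fun _ => ⊤ := fun j hj => Nat.find_min htopex hj
  have htops : ∀ j, s ≤ j → M j = fun _ => ⊤ := by
    intro j
    induction j with
    | zero => intro hj; have : s = 0 := by omega
              rw [← this]; exact hstop
    | succ j ih =>
      intro hj
      by_cases h : s = j + 1
      · rw [← h]; exact hstop
      · exact HN.HNs_succ_of_top hd tl n θ φ j (ih (by omega))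
  have cond2 : ∀ j, qIsSubrep hd tl n φ (M j) := fun j => (HN.HNs hd tl n θ φ j).2
  have cond4 : ∀ j, j < s → famLE (M j) (M (j + 1)) ∧ M j ≠ M (j + 1) := by
    intro j hj
    obtain ⟨h1, h2, -, -⟩ := HN.HNs_succ_spec hd tl n θ φ j (hlt j hj)
    exact ⟨h1, Ne.symm h2⟩
  have cond5 : ∀ j, j < s → quotSemistable hd tl n θ φ (M j) (M (j + 1)) := by
    intro j hj P hP hNP hPM hPne
    obtain ⟨-, -, hmax, -⟩ := HN.HNs_succ_spec hd tl n θ φ j (hlt j hj)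
    exact hmax P hP hNP hPne
  have cond6 : ∀ j, j + 2 ≤ s →
      slopeQuot n θ (M (j + 1)) (M (j + 2)) < slopeQuot n θ (M j) (M (j + 1)) := by
    intro j hj
    by_contra hcon
    push_neg at hcon
    obtain ⟨hle1, hne1, hmax1, hchar1⟩ := HN.HNs_succ_spec hd tl n θ φ j (hlt j (by omega))
    obtain ⟨hle2, hne2, -, -⟩ := HN.HNs_succ_spec hd tl n θ φ (j+1) (hlt (j+1) (by omega))
    -- names: N = M j, P = M (j+1), R = M (j+2)
    have hNP : famLE (M j) (M (j+1)) := hle1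
    have hPR : famLE (M (j+1)) (M (j+2)) := hle2
    have hNR : famLE (M j) (M (j+2)) := HN.famLE_trans n hNP hPR
    have hPneN : M (j+1) ≠ M j := hne1
    have hRneP : M (j+2) ≠ M (j+1) := hne2
    have hRneN : M (j+2) ≠ M j := by
      intro h
      have h1 := HN.rk_lt n hNP (Ne.symm hPneN)
      have h2 := HN.rk_lt n hPR (Ne.symm hRneP)
      rw [h] at h2
      omega
    set μ : ℚ := slopeQuot n θ (M j) (M (j+1)) with hμ
    have e1 : ((HN.dg n θ (M (j+1)) - HN.dg n θ (M j) : ℤ) : ℚ)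
        = μ * ((HN.rk n (M (j+1)) - HN.rk n (M j) : ℤ) : ℚ) :=
      (HN.slope_eq_iff n θ hNP (Ne.symm hPneN)).1 rfl
    have e2 : μ * ((HN.rk n (M (j+2)) - HN.rk n (M (j+1)) : ℤ) : ℚ)
        ≤ ((HN.dg n θ (M (j+2)) - HN.dg n θ (M (j+1)) : ℤ) : ℚ) :=
      (HN.le_slope_iff n θ hPR hRneP.symm).1 hcon
    have e3 : μ ≤ slopeQuot n θ (M j) (M (j+2)) := by
      rw [HN.le_slope_iff n θ hNR hRneN.symm]
      push_cast at e1 e2 ⊢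
      linarith
    have h4 : famLE (M (j+2)) (M (j+1)) :=
      hchar1 (M (j+2)) (cond2 (j+2)) hNR hRneN e3
    exact hRneP (HN.famLE_antisymm n h4 hPR)
  refine ⟨(s, M), ⟨rfl, cond2, htops, cond4, cond5, cond6⟩, ?_⟩
  -- uniqueness
  rintro ⟨s', M'⟩ ⟨c1', c2', c3', c4', c5', c6'⟩
  simp only at c1' c2' c3' c4' c5' c6'
  have key : ∀ j, j < s' → M' j ≠ fun _ => ⊤ := by
    intro j hj h
    have h1 : M' (j+1) = fun _ => ⊤ :=
      HN.top_of_famLE_top n (h ▸ (c4' j hj).1)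
    exact (c4' j hj).2 (h.trans h1.symm)
  have heq : ∀ j, j ≤ s' → M' j = M j := by
    intro j
    induction j with
    | zero =>
      intro _
      rw [c1', hM]
      exact (HN.HNs_zero hd tl n θ φ).symm
    | succ j ih =>
      intro hjs
      have hj : j < s' := by omega
      have hMj : M' j = M j := ih (by omega)
      have hMjtop : M j ≠ fun _ => ⊤ := hMj ▸ key j hj
      obtain ⟨hle, hne, hmax, hchar⟩ := HN.HNs_succ_spec hd tl n θ φ j hMjtop
      have hfs := HN.first_step hd tl n θ φ (fun t => M' (j + t)) (s' - j) (by omega)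
        (fun t => c2' (j + t))
        (fun t ht => c4' (j + t) (by omega))
        (by
          show M' (j + (s' - j)) = fun _ => ⊤
          have h : j + (s' - j) = s' := by omega
          rw [h]
          exact c3' s' le_rfl)
        (fun t ht => c5' (j + t) (by omega))
        (fun t ht => c6' (j + t) (by omega))
      have hA0 : famLE (M' j) (M (j+1)) := by rw [hMj]; exact hle
      have hA1 : M (j+1) ≠ M' j := by rw [hMj]; exact hne
      obtain ⟨hA, hB⟩ := hfs (M (j+1)) (cond2 (j+1)) hA0 hA1
      have hA' : slopeQuot n θ (M j) (M (j+1)) ≤ slopeQuot n θ (M j) (M' (j+1)) := by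
        rw [← hMj]; exact hA
      have hB' : slopeQuot n θ (M j) (M' (j+1)) ≤ slopeQuot n θ (M j) (M (j+1)) →
          famLE (M (j+1)) (M' (j+1)) := by
        rw [← hMj]; exact hB
      have hD1 : famLE (M j) (M' (j+1)) := by rw [← hMj]; exact (c4' j hj).1
      have hD2 : M' (j+1) ≠ M j := by rw [← hMj]; exact Ne.symm (c4' j hj).2
      have hC : slopeQuot n θ (M j) (M' (j+1)) ≤ slopeQuot n θ (M j) (M (j+1)) :=
        hmax (M' (j+1)) (c2' (j+1)) hD1 hD2
      have h1 : famLE (M (j+1)) (M' (j+1)) := hB' hC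
      have h2 : famLE (M' (j+1)) (M (j+1)) :=
        hchar (M' (j+1)) (c2' (j+1)) hD1 hD2 hA'
      exact HN.famLE_antisymm n h2 h1
  have hss' : s = s' := by
    have h1 : M s' = fun _ => ⊤ := by rw [← heq s' le_rfl]; exact c3' s' le_rfl
    have h2 : s ≤ s' := Nat.find_le h1
    by_contra hne
    have h3 : s < s' := by omega
    exact key s h3 ((heq s h3.le).trans hstop)
  have hMM : M' = M := by
    funext j
    rcases le_or_gt j s' with h | h
    · exact heq j h
    · rw [c3' j h.le, htops j (by omega)]
  simp only [Prod.mk.injEq]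
  exact ⟨hss'.symm, hMM⟩
end

section
/- Let φ ∈ Rep(Q,n) be slope-semistable, i.e. s(W) ≤ s(V) for every nonzero subrepresentation W of φ, where V = (V_i)_{i∈I}. Then there exists a filtration 0 = M⁰ ⊊ M¹ ⊊ ... ⊊ Mˢ = V by subrepresentations of φ such that for each j the quotient Mʲ/Mʲ⁻¹ has slope s(Mʲ/Mʲ⁻¹) = s(V) and is stable, i.e. s(P/Mʲ⁻¹) < s(Mʲ/Mʲ⁻¹) for every subrepresentation P of φ with Mʲ⁻¹ ⊊ P ⊊ Mʲ. (This is a Jordan–Hölder filtration of φ.) -/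
open Matrix

/-- The slope `s(W) = (∑ᵢ θᵢ dim Wᵢ) / (∑ᵢ dim Wᵢ)` of a family of subspaces. -/
noncomputable def qSlope {I : Type} [Fintype I] (n : I → ℕ) (θ : I → ℤ)
    (W : ∀ i : I, Submodule ℂ (Fin (n i) → ℂ)) : ℚ :=
  ((∑ i : I, θ i * (Module.finrank ℂ (W i) : ℤ) : ℤ) : ℚ) /
    ((∑ i : I, Module.finrank ℂ (W i) : ℕ) : ℚ)

section JHAux

variable {I A : Type} [Fintype I] [Fintype A]

/-- Total dimension of a family of subspaces. -/
noncomputable def qDim (n : I → ℕ)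
    (W : ∀ i : I, Submodule ℂ (Fin (n i) → ℂ)) : ℕ :=
  ∑ i, Module.finrank ℂ (W i)

lemma qDim_eq_zero_iff (n : I → ℕ)
    (W : ∀ i : I, Submodule ℂ (Fin (n i) → ℂ)) :
    qDim n W = 0 ↔ W = (fun _ => ⊥) := by
  constructor
  · intro h
    funext i
    have := Finset.sum_eq_zero_iff.mp h i (Finset.mem_univ i)
    exact Submodule.finrank_eq_zero.mp this
  · rintro rfl
    simp [qDim]

lemma qDim_lt (n : I → ℕ) {N M : ∀ i : I, Submodule ℂ (Fin (n i) → ℂ)}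
    (h : famLE N M) (hne : N ≠ M) : qDim n N < qDim n M := by
  obtain ⟨i, hi⟩ := Function.ne_iff.mp hne
  exact Finset.sum_lt_sum (fun i _ => Submodule.finrank_mono (h i))
    ⟨i, Finset.mem_univ i,
      Submodule.finrank_lt_finrank_of_lt (lt_of_le_of_ne (h i) hi)⟩

lemma qDim_le_top (n : I → ℕ) (W : ∀ i : I, Submodule ℂ (Fin (n i) → ℂ)) :
    qDim n W ≤ qDim n (fun _ => ⊤) :=
  Finset.sum_le_sum fun i _ => Submodule.finrank_mono le_top

lemma slopeQuot_eq (n : I → ℕ) (θ : I → ℤ)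
    (N M : ∀ i : I, Submodule ℂ (Fin (n i) → ℂ)) :
    slopeQuot n θ N M =
      ((qThetaVal n θ M - qThetaVal n θ N : ℤ) : ℚ) /
        (((qDim n M : ℤ) - (qDim n N : ℤ) : ℤ) : ℚ) := by
  unfold slopeQuot qThetaVal qDim
  rw [show (∑ i : I, θ i * ((Module.finrank ℂ (M i) : ℤ) - (Module.finrank ℂ (N i) : ℤ)))
      = (∑ i : I, θ i * (Module.finrank ℂ (M i) : ℤ))
        - ∑ i : I, θ i * (Module.finrank ℂ (N i) : ℤ) by
    rw [← Finset.sum_sub_distrib]; congr 1; ext i; ring]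
  congr 1
  push_cast [Finset.sum_sub_distrib]
  ring

lemma qSlope_eq (n : I → ℕ) (θ : I → ℤ)
    (W : ∀ i : I, Submodule ℂ (Fin (n i) → ℂ)) :
    qSlope n θ W = ((qThetaVal n θ W : ℤ) : ℚ) / ((qDim n W : ℕ) : ℚ) := rfl

/-- Invariant carried along the filtration: subrepresentation with slope equal
to the total slope (in cross-multiplied form). -/
def JHInv {hd tl : A → I} {n : I → ℕ} (θ : I → ℤ) (φ : QRep hd tl n)
    (N : ∀ i : I, Submodule ℂ (Fin (n i) → ℂ)) : Prop :=
  qIsSubrep hd tl n φ N ∧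
    qThetaVal n θ N * (qDim n (fun _ => ⊤ : ∀ i : I, Submodule ℂ (Fin (n i) → ℂ)) : ℤ)
      = qThetaVal n θ (fun _ => ⊤) * (qDim n N : ℤ)

/-- A good next step of the filtration above `N`. -/
def JHGood {hd tl : A → I} {n : I → ℕ} (θ : I → ℤ) (φ : QRep hd tl n)
    (N M : ∀ i : I, Submodule ℂ (Fin (n i) → ℂ)) : Prop :=
  JHInv θ φ M ∧ famLE N M ∧ N ≠ M ∧
    ∀ P : ∀ i : I, Submodule ℂ (Fin (n i) → ℂ), qIsSubrep hd tl n φ P →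
      famLE N P → N ≠ P →
      qThetaVal n θ P * (qDim n (fun _ => ⊤ : ∀ i : I, Submodule ℂ (Fin (n i) → ℂ)) : ℤ)
        = qThetaVal n θ (fun _ => ⊤) * (qDim n P : ℤ) →
      qDim n M ≤ qDim n P

lemma jh_inv_bot {hd tl : A → I} {n : I → ℕ} (θ : I → ℤ) (φ : QRep hd tl n) :
    JHInv θ φ (fun _ => ⊥ : ∀ i : I, Submodule ℂ (Fin (n i) → ℂ)) := by
  constructor
  · intro α v hv
    have hv0 : v = 0 := hv
    simp [hv0, Submodule.zero_mem]
  · have h0 : qDim n (fun _ => ⊥ : ∀ i : I, Submodule ℂ (Fin (n i) → ℂ)) = 0 := by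
      simp [qDim]
    have h1 : qThetaVal n θ (fun _ => ⊥ : ∀ i : I, Submodule ℂ (Fin (n i) → ℂ)) = 0 := by
      simp [qThetaVal]
    rw [h0, h1]; ring

lemma jh_inv_top {hd tl : A → I} {n : I → ℕ} (θ : I → ℤ) (φ : QRep hd tl n) :
    JHInv θ φ (fun _ => ⊤ : ∀ i : I, Submodule ℂ (Fin (n i) → ℂ)) :=
  ⟨fun _ _ _ => trivial, rfl⟩

/-- Existence of a good next step. -/
lemma jh_step {hd tl : A → I} {n : I → ℕ} (θ : I → ℤ) (φ : QRep hd tl n)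
    {N : ∀ i : I, Submodule ℂ (Fin (n i) → ℂ)}
    (hne : N ≠ (fun _ => ⊤)) :
    ∃ M, JHGood θ φ N M := by
  classical
  set Cand : (∀ i : I, Submodule ℂ (Fin (n i) → ℂ)) → Prop := fun P =>
    qIsSubrep hd tl n φ P ∧ famLE N P ∧ N ≠ P ∧
      qThetaVal n θ P * (qDim n (fun _ => ⊤ : ∀ i : I, Submodule ℂ (Fin (n i) → ℂ)) : ℤ)
        = qThetaVal n θ (fun _ => ⊤) * (qDim n P : ℤ) with hCand
  have htop : Cand (fun _ => ⊤) :=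
    ⟨(jh_inv_top θ φ).1, fun _ => le_top, hne, (jh_inv_top θ φ).2⟩
  have hEx : ∃ k : ℕ, ∃ P, Cand P ∧ qDim n P = k := ⟨_, _, htop, rfl⟩
  obtain ⟨M, hM, hMd⟩ := Nat.find_spec hEx
  refine ⟨M, ⟨⟨hM.1, hM.2.2.2⟩, hM.2.1, hM.2.2.1, ?_⟩⟩
  intro P hP1 hP2 hP3 hP4
  rw [hMd]
  exact Nat.find_min' hEx ⟨P, ⟨hP1, hP2, hP3, hP4⟩, rfl⟩

/-- Integer form of slope-semistability. -/
lemma hss_int {hd tl : A → I} {n : I → ℕ} {θ : I → ℤ} {φ : QRep hd tl n}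
    (hss : ∀ W : ∀ i : I, Submodule ℂ (Fin (n i) → ℂ), qIsSubrep hd tl n φ W →
      W ≠ (fun _ => ⊥) → qSlope n θ W ≤ qSlope n θ (fun _ => ⊤))
    (W : ∀ i : I, Submodule ℂ (Fin (n i) → ℂ)) (hW : qIsSubrep hd tl n φ W)
    (hWne : W ≠ (fun _ => ⊥)) :
    qThetaVal n θ W * (qDim n (fun _ => ⊤ : ∀ i : I, Submodule ℂ (Fin (n i) → ℂ)) : ℤ)
      ≤ qThetaVal n θ (fun _ => ⊤) * (qDim n W : ℤ) := by
  have hdW : 0 < qDim n W := by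
    rcases Nat.eq_zero_or_pos (qDim n W) with h | h
    · exact absurd ((qDim_eq_zero_iff n W).mp h) hWne
    · exact h
  have hdT : 0 < qDim n (fun _ => ⊤ : ∀ i : I, Submodule ℂ (Fin (n i) → ℂ)) :=
    lt_of_lt_of_le hdW (qDim_le_top n W)
  have h := hss W hW hWne
  rw [qSlope_eq, qSlope_eq,
    div_le_div_iff₀ (by exact_mod_cast hdW) (by exact_mod_cast hdT)] at h
  exact_mod_cast h

/-- Successive quotients have total slope. -/
lemma jh_quot_slope {hd tl : A → I} {n : I → ℕ} {θ : I → ℤ} {φ : QRep hd tl n}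
    {N M : ∀ i : I, Submodule ℂ (Fin (n i) → ℂ)}
    (hN : JHInv θ φ N) (hG : JHGood θ φ N M) :
    slopeQuot n θ N M = qSlope n θ (fun _ => ⊤) := by
  obtain ⟨⟨_, hMslope⟩, hNM, hNMne, _⟩ := hG
  have hdNM : qDim n N < qDim n M := qDim_lt n hNM hNMne
  have hdT : qDim n M ≤ qDim n (fun _ => ⊤ : ∀ i : I, Submodule ℂ (Fin (n i) → ℂ)) :=
    qDim_le_top n M
  rw [slopeQuot_eq, qSlope_eq]
  rw [div_eq_div_iff]
  · have key : (qThetaVal n θ M - qThetaVal n θ N)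
        * (qDim n (fun _ => ⊤ : ∀ i : I, Submodule ℂ (Fin (n i) → ℂ)) : ℤ)
        = qThetaVal n θ (fun _ => ⊤) * ((qDim n M : ℤ) - (qDim n N : ℤ)) := by
      linear_combination hMslope - hN.2
    exact_mod_cast key
  · have : (0:ℤ) < (qDim n M : ℤ) - (qDim n N : ℤ) := by exact_mod_cast (by omega : (0:ℤ) < (qDim n M : ℤ) - (qDim n N : ℤ))
    exact_mod_cast this.ne'
  · have : 0 < qDim n (fun _ => ⊤ : ∀ i : I, Submodule ℂ (Fin (n i) → ℂ)) := by omega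
    exact_mod_cast this.ne'

/-- The key strict inequality: any intermediate `P` has strictly smaller quotient slope. -/
lemma jh_strict {hd tl : A → I} {n : I → ℕ} {θ : I → ℤ} {φ : QRep hd tl n}
    (hss : ∀ W : ∀ i : I, Submodule ℂ (Fin (n i) → ℂ), qIsSubrep hd tl n φ W →
      W ≠ (fun _ => ⊥) → qSlope n θ W ≤ qSlope n θ (fun _ => ⊤))
    {N M : ∀ i : I, Submodule ℂ (Fin (n i) → ℂ)}
    (hN : JHInv θ φ N) (hG : JHGood θ φ N M)
    (P : ∀ i : I, Submodule ℂ (Fin (n i) → ℂ)) (hP : qIsSubrep hd tl n φ P)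
    (hNP : famLE N P) (hPM : famLE P M) (hPne1 : P ≠ N) (hPne2 : P ≠ M) :
    slopeQuot n θ N P < slopeQuot n θ N M := by
  obtain ⟨⟨hMsub, hMslope⟩, hNM, hNMne, hmin⟩ := hG
  set T := qThetaVal n θ (fun _ => ⊤ : ∀ i : I, Submodule ℂ (Fin (n i) → ℂ)) with hT
  set D := (qDim n (fun _ => ⊤ : ∀ i : I, Submodule ℂ (Fin (n i) → ℂ)) : ℤ) with hD
  set tN := qThetaVal n θ N
  set tP := qThetaVal n θ P
  set tM := qThetaVal n θ M
  set dN := (qDim n N : ℤ) with hdN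
  set dP := (qDim n P : ℤ) with hdP
  set dM := (qDim n M : ℤ) with hdM
  have hdNP : qDim n N < qDim n P := qDim_lt n hNP (Ne.symm hPne1)
  have hdPM : qDim n P < qDim n M := qDim_lt n hPM hPne2
  have hdNPz : dN < dP := by rw [hdN, hdP]; exact_mod_cast hdNP
  have hdPMz : dP < dM := by rw [hdP, hdM]; exact_mod_cast hdPM
  have hPbot : P ≠ (fun _ => ⊥) := by
    intro h
    rw [← qDim_eq_zero_iff] at h
    omega
  have hPle : tP * D ≤ T * dP := hss_int hss P hP hPbot
  have hPne : tP * D ≠ T * dP := by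
    intro h
    have := hmin P hP hNP (Ne.symm hPne1) h
    omega
  have hPlt : tP * D < T * dP := lt_of_le_of_ne hPle hPne
  have hDpos : (0 : ℤ) < D := by
    have h1 : qDim n M ≤ qDim n (fun _ => ⊤ : ∀ i : I, Submodule ℂ (Fin (n i) → ℂ)) :=
      qDim_le_top n M
    omega
  rw [slopeQuot_eq, slopeQuot_eq]
  have hdenP : (0 : ℚ) < ((dP - dN : ℤ) : ℚ) := by
    exact_mod_cast (by omega : (0:ℤ) < dP - dN)
  have hdenM : (0 : ℚ) < ((dM - dN : ℤ) : ℚ) := by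
    exact_mod_cast (by omega : (0:ℤ) < dM - dN)
  rw [div_lt_div_iff₀ hdenP hdenM]
  have h2 : (tM - tN) * D = T * (dM - dN) := by linear_combination hMslope - hN.2
  have h3 : (tP - tN) * D < T * (dP - dN) := by
    rw [sub_mul, mul_sub]
    have := hN.2
    linarith
  have h4 := mul_lt_mul_of_pos_right h3 (show (0:ℤ) < dM - dN by omega)
  have h5 : (tM - tN) * (dP - dN) * D = T * (dP - dN) * (dM - dN) := by
    linear_combination (dP - dN) * h2
  have h6 : (tP - tN) * (dM - dN) * D < (tM - tN) * (dP - dN) * D := by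
    nlinarith [h4, h5]
  have h7 : (tP - tN) * (dM - dN) < (tM - tN) * (dP - dN) :=
    lt_of_mul_lt_mul_right h6 (le_of_lt hDpos)
  exact_mod_cast h7

open Classical in
/-- The filtration, built recursively by choosing minimal good steps. -/
noncomputable def jhFilt {hd tl : A → I} {n : I → ℕ} (θ : I → ℤ) (φ : QRep hd tl n)
    (hstep : ∀ N : ∀ i : I, Submodule ℂ (Fin (n i) → ℂ), JHInv θ φ N →
      N ≠ (fun _ => ⊤) → ∃ M, JHGood θ φ N M) :
    ℕ → {N : ∀ i : I, Submodule ℂ (Fin (n i) → ℂ) // JHInv θ φ N}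
  | 0 => ⟨fun _ => ⊥, jh_inv_bot θ φ⟩
  | (j+1) =>
      if h : (jhFilt θ φ hstep j).1 = (fun _ => ⊤) then ⟨fun _ => ⊤, jh_inv_top θ φ⟩
      else ⟨(hstep _ (jhFilt θ φ hstep j).2 h).choose,
        (hstep _ (jhFilt θ φ hstep j).2 h).choose_spec.1⟩

lemma jhFilt_succ_top {hd tl : A → I} {n : I → ℕ} (θ : I → ℤ) (φ : QRep hd tl n)
    (hstep : ∀ N : ∀ i : I, Submodule ℂ (Fin (n i) → ℂ), JHInv θ φ N →
      N ≠ (fun _ => ⊤) → ∃ M, JHGood θ φ N M)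
    (j : ℕ) (h : (jhFilt θ φ hstep j).1 = (fun _ => ⊤)) :
    (jhFilt θ φ hstep (j+1)).1 = (fun _ => ⊤) := by
  simp only [jhFilt, dif_pos h]

lemma jhFilt_good {hd tl : A → I} {n : I → ℕ} (θ : I → ℤ) (φ : QRep hd tl n)
    (hstep : ∀ N : ∀ i : I, Submodule ℂ (Fin (n i) → ℂ), JHInv θ φ N →
      N ≠ (fun _ => ⊤) → ∃ M, JHGood θ φ N M)
    (j : ℕ) (h : (jhFilt θ φ hstep j).1 ≠ (fun _ => ⊤)) :
    JHGood θ φ (jhFilt θ φ hstep j).1 (jhFilt θ φ hstep (j+1)).1 := by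
  have : (jhFilt θ φ hstep (j+1)).1 = (hstep _ (jhFilt θ φ hstep j).2 h).choose := by
    simp only [jhFilt, dif_neg h]
  rw [this]
  exact (hstep _ (jhFilt θ φ hstep j).2 h).choose_spec

end JHAux


/-- Existence of a Jordan–Hölder filtration: if `φ` is slope-semistable, there is a
filtration `0 = M⁰ ⊊ M¹ ⊊ ... ⊊ Mˢ = V` by subrepresentations whose successive quotients
all have slope `s(V)` and are stable.  (Encoded as a pair `(s, M)` with `M : ℕ → families`
constantly equal to `V` from stage `s` on.) -/
theorem statement12 {I A : Type} [Fintype I] [Fintype A] (hd tl : A → I) (n : I → ℕ)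
    (θ : I → ℤ) (φ : QRep hd tl n)
    (hss : ∀ W : ∀ i : I, Submodule ℂ (Fin (n i) → ℂ), qIsSubrep hd tl n φ W →
      W ≠ (fun _ => ⊥) → qSlope n θ W ≤ qSlope n θ (fun _ => ⊤)) :
    ∃ (s : ℕ) (M : ℕ → ∀ i : I, Submodule ℂ (Fin (n i) → ℂ)),
      (M 0 = fun _ => ⊥) ∧
      (∀ j : ℕ, qIsSubrep hd tl n φ (M j)) ∧
      (∀ j : ℕ, s ≤ j → M j = fun _ => ⊤) ∧
      (∀ j : ℕ, j < s → famLE (M j) (M (j + 1)) ∧ M j ≠ M (j + 1)) ∧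
      (∀ j : ℕ, j < s →
        slopeQuot n θ (M j) (M (j + 1)) = qSlope n θ (fun _ => ⊤)) ∧
      (∀ j : ℕ, j < s →
        ∀ P : ∀ i : I, Submodule ℂ (Fin (n i) → ℂ), qIsSubrep hd tl n φ P →
          famLE (M j) P → famLE P (M (j + 1)) → P ≠ M j → P ≠ M (j + 1) →
          slopeQuot n θ (M j) P < slopeQuot n θ (M j) (M (j + 1))) := by

  classical
  have hstep : ∀ N : ∀ i : I, Submodule ℂ (Fin (n i) → ℂ), JHInv θ φ N →
      N ≠ (fun _ => ⊤) → ∃ M, JHGood θ φ N M :=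
    fun N _ hne => jh_step θ φ hne
  set F := jhFilt θ φ hstep with hF
  -- dimension grows along the filtration until it reaches ⊤
  have hdim : ∀ j : ℕ, (F j).1 = (fun _ => ⊤) ∨ j ≤ qDim n (F j).1 := by
    intro j
    induction j with
    | zero => exact Or.inr (Nat.zero_le _)
    | succ j ih =>
      by_cases h : (F j).1 = (fun _ => ⊤)
      · exact Or.inl (jhFilt_succ_top θ φ hstep j h)
      · right
        obtain ⟨_, hle, hne, _⟩ := jhFilt_good θ φ hstep j h
        have hlt : qDim n (F j).1 < qDim n (F (j+1)).1 := qDim_lt n hle hne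
        rcases ih with h' | h'
        · exact absurd h' h
        · omega
  have hex : ∃ j : ℕ, (F j).1 = (fun _ => ⊤) := by
    refine ⟨qDim n (fun _ => ⊤ : ∀ i : I, Submodule ℂ (Fin (n i) → ℂ)) + 1, ?_⟩
    rcases hdim (qDim n (fun _ => ⊤ : ∀ i : I, Submodule ℂ (Fin (n i) → ℂ)) + 1) with h | h
    · exact h
    · have := qDim_le_top n (F (qDim n (fun _ => ⊤ : ∀ i : I, Submodule ℂ (Fin (n i) → ℂ)) + 1)).1
      omega
  set s := Nat.find hex with hs
  have hlt_ne : ∀ j : ℕ, j < s → (F j).1 ≠ (fun _ => ⊤) := fun j hj => Nat.find_min hex hj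
  have hge_top : ∀ j : ℕ, s ≤ j → (F j).1 = (fun _ => ⊤) := by
    intro j hj
    obtain ⟨k, rfl⟩ := Nat.exists_eq_add_of_le hj
    induction k with
    | zero => exact Nat.find_spec hex
    | succ k ih =>
      have := ih (by omega)
      exact jhFilt_succ_top θ φ hstep (s + k) this
  refine ⟨s, fun j => (F j).1, rfl, fun j => (F j).2.1, hge_top, ?_, ?_, ?_⟩
  · intro j hj
    obtain ⟨_, hle, hne, _⟩ := jhFilt_good θ φ hstep j (hlt_ne j hj)
    exact ⟨hle, hne⟩
  · intro j hj
    exact jh_quot_slope (F j).2 (jhFilt_good θ φ hstep j (hlt_ne j hj))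
  · intro j hj P hP hle1 hle2 hne1 hne2
    exact jh_strict hss (F j).2 (jhFilt_good θ φ hstep j (hlt_ne j hj)) P hP hle1 hle2 hne1 hne2
end
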